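/- arXiv:1508.03379 — 7 statements merged into one kernel-verified Lean document; each statement's English description precedes it below -/
import Mathlib

section
/- If probability measures μₙ on ℝ₊ with finite nonzero means converge to μ (with finite nonzero mean) in the Wasserstein-1 sense (convergence in distribution plus uniform integrability), then the size biasings μₙ* converge to μ* in distribution. -/
/-!
Since `∫ f dμ* = (∫ x f(x) dμ) / (∫ x dμ)`, it suffices that
`∫ x f(x) dμₙ → ∫ x f(x) dν` for every bounded continuous `f` (the case `f = 1` gives the
means). Truncating `x` at level `M` turns `x f(x)` into a bounded continuous function, whose
integrals converge by weak convergence; the truncation error is at most `‖f‖ ∫_{x ≥ M} x dμ`,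
which by uniform integrability tends to `0` uniformly in `n` as `M → ∞`. The two limits may
then be exchanged (Moore–Osgood).
-/

open MeasureTheory Filter

/-- The size biasing `μ* (B) = (∫_B x dμ) / m` of a measure `μ` on `ℝ₊`. -/
noncomputable def sizeBias (μ : Measure ℝ) : Measure ℝ :=
  (ENNReal.ofReal (∫ x, x ∂μ))⁻¹ • μ.withDensity (fun x => ENNReal.ofReal x)

open Set Topology BoundedContinuousFunction

noncomputable def trunc (M : ℝ) : ℝ →ᵇ ℝ :=
  .ofNormedAddCommGroup (fun x => min (max x 0) M) (by fun_prop) |M| fun x => by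
    rw [Real.norm_eq_abs, abs_le]
    constructor <;> cases max_cases x 0 <;> cases min_cases (max x 0) M <;>
      linarith [le_abs_self M, neg_abs_le M]

section
variable {μ : Measure ℝ}

theorem ae_nonneg_of_measure_neg_eq_zero (hμ : μ {x | x < 0} = 0) : ∀ᵐ x ∂μ, 0 ≤ x := by
  simpa [ae_iff, not_le] using hμ

theorem integral_sizeBias (hμ : μ {x | x < 0} = 0) (f : ℝ → ℝ) :
    ∫ x, f x ∂(sizeBias μ) = (∫ x, x * f x ∂μ) / ∫ x, x ∂μ := by
  have hnonneg := ae_nonneg_of_measure_neg_eq_zero hμ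
  have h : ∫ x, (ENNReal.ofReal x).toReal • f x ∂μ = ∫ x, x * f x ∂μ := by
    refine integral_congr_ae ?_
    filter_upwards [hnonneg] with x hx
    simp [ENNReal.toReal_ofReal hx]
  rw [sizeBias, integral_smul_measure, integral_withDensity_eq_integral_toReal_smul
    ENNReal.measurable_ofReal (by simp), h, ENNReal.toReal_inv,
    ENNReal.toReal_ofReal (integral_nonneg_of_ae hnonneg), smul_eq_mul, inv_mul_eq_div]

theorem abs_mul_sub_trunc_mul_le (f : ℝ →ᵇ ℝ) {M x : ℝ} (hM : 0 ≤ M) (hx : 0 ≤ x) :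
    |x * f x - trunc M x * f x| ≤ ‖f‖ * (Ici M).indicator id x := by
  have hf : |f x| ≤ ‖f‖ := by simpa using f.norm_coe_le_norm x
  rw [← sub_mul, abs_mul]
  simp only [trunc, BoundedContinuousFunction.coe_ofNormedAddCommGroup, max_eq_left hx]
  rcases le_or_gt M x with h | h
  · rw [indicator_of_mem (mem_Ici.2 h), min_eq_right h, abs_of_nonneg (by linarith), id]
    nlinarith [abs_nonneg (f x)]
  · simp [indicator_of_notMem (show x ∉ Ici M from not_le.2 h), min_eq_left h.le]

theorem tendsto_setIntegral_Ici (hint : Integrable (fun x => x) μ) :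
    Tendsto (fun M => ∫ x in Ici M, x ∂μ) atTop (𝓝 0) := by
  have h := tendsto_setIntegral_of_antitone (μ := μ) (fun _ => measurableSet_Ici) antitone_Ici
    ⟨0, hint.integrableOn⟩
  have hempty : (⋂ M : ℝ, Ici M) = ∅ := by
    ext x
    simpa using ⟨x + 1, by linarith⟩
  simpa [hempty] using h

theorem abs_integral_mul_sub_integral_trunc_mul_le [IsFiniteMeasure μ]
    (hμ : μ {x | x < 0} = 0) (hint : Integrable (fun x => x) μ) (f : ℝ →ᵇ ℝ) {M : ℝ} (hM : 0 ≤ M) :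
    |∫ x, x * f x ∂μ - ∫ x, (trunc M * f) x ∂μ| ≤ ‖f‖ * ∫ x in Ici M, x ∂μ := by
  have hxf : Integrable (fun x => x * f x) μ :=
    hint.mul_bdd f.continuous.aestronglyMeasurable (.of_forall f.norm_coe_le_norm)
  have htf := (trunc M * f).integrable μ
  rw [← integral_sub hxf htf, ← integral_indicator measurableSet_Ici, ← integral_const_mul]
  refine abs_integral_le_integral_abs.trans (integral_mono_ae (hxf.sub htf).abs
    ((hint.indicator measurableSet_Ici).const_mul _) ?_)
  filter_upwards [ae_nonneg_of_measure_neg_eq_zero hμ] with x hx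
  exact abs_mul_sub_trunc_mul_le f hM hx

theorem tendsto_integral_trunc_mul [IsFiniteMeasure μ] (hμ : μ {x | x < 0} = 0)
    (hint : Integrable (fun x => x) μ) (f : ℝ →ᵇ ℝ) :
    Tendsto (fun M => ∫ x, (trunc M * f) x ∂μ) atTop (𝓝 (∫ x, x * f x ∂μ)) := by
  rw [tendsto_iff_norm_sub_tendsto_zero]
  refine squeeze_zero' (.of_forall fun _ => norm_nonneg _) ?_
    (by simpa using (tendsto_setIntegral_Ici hint).const_mul ‖f‖)
  filter_upwards [eventually_ge_atTop 0] with M hM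
  rw [Real.norm_eq_abs, abs_sub_comm]
  exact abs_integral_mul_sub_integral_trunc_mul_le hμ hint f hM

end

theorem tendstoUniformly_integral_trunc_mul {ι : Type*} {μ : ι → Measure ℝ}
    [∀ i, IsFiniteMeasure (μ i)] (hμ : ∀ i, μ i {x | x < 0} = 0)
    (hint : ∀ i, Integrable (fun x => x) (μ i))
    (hui : ∀ ε > (0 : ℝ), ∃ M : ℝ, ∀ i, ∫ x in Ici M, x ∂(μ i) < ε) (f : ℝ →ᵇ ℝ) :
    TendstoUniformly (fun M i => ∫ x, (trunc M * f) x ∂(μ i))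
      (fun i => ∫ x, x * f x ∂(μ i)) atTop := by
  rw [Metric.tendstoUniformly_iff]
  intro ε hε
  obtain ⟨M₀, hM₀⟩ := hui (ε / (‖f‖ + 1)) (by positivity)
  filter_upwards [eventually_ge_atTop (max M₀ 0)] with M hM i
  obtain ⟨hM₀M, hM⟩ := max_le_iff.1 hM
  have htail : ∫ x in Ici M, x ∂(μ i) < ε / (‖f‖ + 1) :=
    (setIntegral_mono_set (hint i).integrableOn
      (ae_restrict_of_ae (ae_nonneg_of_measure_neg_eq_zero (hμ i)))
      (Ici_subset_Ici.2 hM₀M).eventuallyLE).trans_lt (hM₀ i)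
  have htail_nonneg : 0 ≤ ∫ x in Ici M, x ∂(μ i) :=
    setIntegral_nonneg measurableSet_Ici fun x hx => hM.trans hx
  rw [Real.dist_eq]
  calc _ ≤ ‖f‖ * ∫ x in Ici M, x ∂(μ i) :=
        abs_integral_mul_sub_integral_trunc_mul_le (hμ i) (hint i) f hM
    _ ≤ (‖f‖ + 1) * ∫ x in Ici M, x ∂(μ i) := by gcongr; linarith
    _ < ε := by rwa [lt_div_iff₀' (by positivity)] at htail

theorem tendsto_integral_mul_of_uniformIntegrable {ι : Type*} {l : Filter ι}
    {μ : ι → Measure ℝ} {ν : Measure ℝ} [∀ i, IsFiniteMeasure (μ i)] [IsFiniteMeasure ν]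
    (hμ : ∀ i, μ i {x | x < 0} = 0) (hν : ν {x | x < 0} = 0)
    (hint : ∀ i, Integrable (fun x => x) (μ i)) (hint' : Integrable (fun x => x) ν)
    (hconv : ∀ f : ℝ →ᵇ ℝ, Tendsto (fun i => ∫ x, f x ∂(μ i)) l (𝓝 (∫ x, f x ∂ν)))
    (hui : ∀ ε > (0 : ℝ), ∃ M : ℝ, ∀ i, ∫ x in Ici M, x ∂(μ i) < ε) (f : ℝ →ᵇ ℝ) :
    Tendsto (fun i => ∫ x, x * f x ∂(μ i)) l (𝓝 (∫ x, x * f x ∂ν)) :=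
  (tendstoUniformly_integral_trunc_mul hμ hint hui f).tendsto_of_eventually_tendsto
    (.of_forall fun M => hconv (trunc M * f)) (tendsto_integral_trunc_mul hν hint' f)

theorem sizeBias_tendsto_general (μ : ℕ → Measure ℝ) (ν : Measure ℝ)
    [∀ n, IsProbabilityMeasure (μ n)] [IsProbabilityMeasure ν]
    (hpos : ∀ n, μ n {x | x < 0} = 0) (hpos' : ν {x | x < 0} = 0)
    (hint : ∀ n, Integrable (fun x => x) (μ n)) (hint' : Integrable (fun x => x) ν)
    (hmean' : 0 < ∫ x, x ∂ν)
    (hconv : ∀ f : BoundedContinuousFunction ℝ ℝ,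
      Tendsto (fun n => ∫ x, f x ∂(μ n)) atTop (nhds (∫ x, f x ∂ν)))
    (hui : ∀ ε > (0 : ℝ), ∃ M : ℝ, ∀ n, ∫ x in {x | M ≤ x}, x ∂(μ n) < ε) :
    ∀ f : BoundedContinuousFunction ℝ ℝ,
      Tendsto (fun n => ∫ x, f x ∂(sizeBias (μ n))) atTop
        (nhds (∫ x, f x ∂(sizeBias ν))) := by
  intro f
  simp only [integral_sizeBias (hpos _), integral_sizeBias hpos']
  have hden := tendsto_integral_mul_of_uniformIntegrable hpos hpos' hint hint' hconv hui 1
  simp only [BoundedContinuousFunction.coe_one, Pi.one_apply, mul_one] at hden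
  have hnum := tendsto_integral_mul_of_uniformIntegrable hpos hpos' hint hint' hconv hui f
  exact hnum.div hden hmean'.ne'

/-- If probability measures `μₙ` on ℝ₊ with finite nonzero means converge to `μ`
(with finite nonzero mean) in distribution and are uniformly integrable
(i.e. converge in the Wasserstein-1 sense), then the size biasings `μₙ*`
converge to `μ*` in distribution. -/
theorem sizeBias_tendsto (μ : ℕ → Measure ℝ) (ν : Measure ℝ)
    [∀ n, IsProbabilityMeasure (μ n)] [IsProbabilityMeasure ν]
    (hpos : ∀ n, μ n {x | x < 0} = 0) (hpos' : ν {x | x < 0} = 0)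
    (hint : ∀ n, Integrable (fun x => x) (μ n)) (hint' : Integrable (fun x => x) ν)
    (hmean : ∀ n, 0 < ∫ x, x ∂(μ n)) (hmean' : 0 < ∫ x, x ∂ν)
    (hconv : ∀ f : BoundedContinuousFunction ℝ ℝ,
      Tendsto (fun n => ∫ x, f x ∂(μ n)) atTop (nhds (∫ x, f x ∂ν)))
    (hui : ∀ ε > (0 : ℝ), ∃ M : ℝ, ∀ n, ∫ x in {x | M ≤ x}, x ∂(μ n) < ε) :
    ∀ f : BoundedContinuousFunction ℝ ℝ,
      Tendsto (fun n => ∫ x, f x ∂(sizeBias (μ n))) atTop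
        (nhds (∫ x, f x ∂(sizeBias ν))) :=
  sizeBias_tendsto_general μ ν hpos hpos' hint hint' hmean' hconv hui
end

section
/- Let p, p₁, p₂, … be probability distributions on ℤ₊ with pₙ → p in distribution and p(0) > 0. Then the extinction probabilities converge: η(pₙ) → η(p), where η(q) denotes the smallest fixed point of the generating function G_q in [0,1]. -/
open Filter

/-- Probability generating function `G_p(s) = ∑ p(k) s^k`. -/
noncomputable def pgf (p : ℕ → ℝ) (s : ℝ) : ℝ := ∑' k : ℕ, p k * s ^ k

/-- Extinction probability: the smallest fixed point of `G_p` in `[0,1]`. -/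
noncomputable def eta (p : ℕ → ℝ) : ℝ :=
  sInf {s : ℝ | s ∈ Set.Icc (0 : ℝ) 1 ∧ pgf p s = s}

/-!
Scheffé's lemma upgrades pointwise convergence `pₙ → p` to `ℓ¹` convergence, hence to uniform
convergence `G_{pₙ} → G_p` on `[0, 1]`. Below `η(p)` the function `G_p - id` is positive, so it
has a positive minimum on `[0, η(p) - ε]` and `G_{pₙ}` has no fixed point there for large `n`.
Above `η(p)`, strict convexity of `G_p` (or, when `p` lives on `{0, 1}`, the condition `p(0) > 0`)
gives `t < η(p) + ε` with `G_p(t) < t`; then `G_{pₙ}(t) < t` for large `n`, and since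
`G_{pₙ}(0) ≥ 0` the intermediate value theorem gives a fixed point of `G_{pₙ}` in `[0, t]`.
-/

open Set

def pgfFixedPoints (r : ℕ → ℝ) : Set ℝ := {s | s ∈ Icc (0 : ℝ) 1 ∧ pgf r s = s}

section Pgf

variable {r : ℕ → ℝ}

lemma norm_mul_pow_le (h0 : ∀ k, 0 ≤ r k) {s : ℝ} (hs : |s| ≤ 1) (k : ℕ) :
    ‖r k * s ^ k‖ ≤ r k := by
  rw [norm_mul, norm_pow, Real.norm_eq_abs, Real.norm_eq_abs, abs_of_nonneg (h0 k)]
  exact mul_le_of_le_one_right (h0 k) (pow_le_one₀ (abs_nonneg s) hs)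

lemma summable_mul_pow (h0 : ∀ k, 0 ≤ r k) (hr : Summable r) {s : ℝ} (hs : |s| ≤ 1) :
    Summable (fun k => r k * s ^ k) :=
  hr.of_norm_bounded (norm_mul_pow_le h0 hs)

lemma pgf_zero : pgf r 0 = r 0 := by
  rw [pgf, tsum_eq_single 0 fun k hk => by simp [zero_pow hk]]
  simp

lemma pgf_one (h1 : HasSum r 1) : pgf r 1 = 1 := by
  simp [pgf, h1.tsum_eq]

lemma continuousOn_pgf (h0 : ∀ k, 0 ≤ r k) (hr : Summable r) :
    ContinuousOn (pgf r) (Icc 0 1) :=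
  continuousOn_tsum (fun k => (continuous_const.mul (continuous_pow k)).continuousOn) hr
    fun k _ hs => norm_mul_pow_le h0 (abs_le.2 ⟨by linarith [hs.1], hs.2⟩) k

lemma pgf_of_forall_two_le_eq_zero (hr : ∀ k, 2 ≤ k → r k = 0) (s : ℝ) :
    pgf r s = r 0 + r 1 * s := by
  rw [pgf, tsum_eq_sum (s := {0, 1}) fun k hk => ?_]
  · simp
  · rw [hr k (by simp at hk; omega), zero_mul]

lemma strictConvexOn_pgf (h0 : ∀ k, 0 ≤ r k) (hr : Summable r) (hk : ∃ k, 2 ≤ k ∧ 0 < r k) :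
    StrictConvexOn ℝ (Icc 0 1) (pgf r) := by
  obtain ⟨k₀, hk₀, hrk₀⟩ := hk
  refine ⟨convex_Icc 0 1, fun x hx y hy hxy a b ha hb hab => ?_⟩
  have habs {s : ℝ} (hs : s ∈ Icc (0 : ℝ) 1) : |s| ≤ 1 := abs_le.2 ⟨by linarith [hs.1], hs.2⟩
  have hx' := summable_mul_pow h0 hr (habs hx)
  have hy' := summable_mul_pow h0 hr (habs hy)
  have hxy' := summable_mul_pow h0 hr (habs ((convex_Icc 0 1) hx hy ha.le hb.le hab))
  have hcombo : a • pgf r x + b • pgf r y = ∑' k, r k * (a * x ^ k + b * y ^ k) := by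
    simp only [pgf, smul_eq_mul, ← tsum_mul_left, ← (hx'.mul_left a).tsum_add (hy'.mul_left b)]
    exact tsum_congr fun k => by ring
  rw [hcombo]
  refine hxy'.tsum_lt_tsum (i := k₀) (fun k => ?_) ?_ ?_
  · exact mul_le_mul_of_nonneg_left
      ((convexOn_pow k).2 (mem_Ici.2 hx.1) (mem_Ici.2 hy.1) ha.le hb.le hab) (h0 k)
  · exact mul_lt_mul_of_pos_left
      ((strictConvexOn_pow hk₀).2 (mem_Ici.2 hx.1) (mem_Ici.2 hy.1) hxy ha hb hab) hrk₀
  · exact ((hx'.mul_left a).add (hy'.mul_left b)).congr fun k => by ring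

lemma abs_pgf_sub_pgf_le {a b : ℕ → ℝ} (ha0 : ∀ k, 0 ≤ a k) (hb0 : ∀ k, 0 ≤ b k)
    (ha : Summable a) (hb : Summable b) {s : ℝ} (hs : |s| ≤ 1) :
    |pgf a s - pgf b s| ≤ ∑' k, |a k - b k| := by
  have hab : Summable fun k => |a k - b k| := summable_abs_iff.2 (ha.sub hb)
  have hbound (k : ℕ) : ‖(a k - b k) * s ^ k‖ ≤ |a k - b k| := by
    simpa [abs_abs] using norm_mul_pow_le (r := fun k => |a k - b k|) (fun k => abs_nonneg _) hs k
  have hnorm : Summable fun k => ‖(a k - b k) * s ^ k‖ :=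
    hab.of_nonneg_of_le (fun _ => norm_nonneg _) hbound
  calc |pgf a s - pgf b s| = ‖∑' k, (a k - b k) * s ^ k‖ := by
        rw [pgf, pgf, ← (summable_mul_pow ha0 ha hs).tsum_sub (summable_mul_pow hb0 hb hs),
          Real.norm_eq_abs]
        simp only [sub_mul]
    _ ≤ ∑' k, ‖(a k - b k) * s ^ k‖ := norm_tsum_le_tsum_norm hnorm
    _ ≤ ∑' k, |a k - b k| := hnorm.tsum_le_tsum hbound hab

end Pgf

section Eta

variable {r : ℕ → ℝ}

lemma isCompact_pgfFixedPoints (h0 : ∀ k, 0 ≤ r k) (hr : Summable r) :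
    IsCompact (pgfFixedPoints r) := by
  have : pgfFixedPoints r = Icc 0 1 ∩ (fun s => pgf r s - s) ⁻¹' {0} := by
    ext s; simp [pgfFixedPoints, sub_eq_zero]
  rw [this]
  exact isCompact_Icc.of_isClosed_subset (((continuousOn_pgf h0 hr).sub continuousOn_id)
    |>.preimage_isClosed_of_isClosed isClosed_Icc isClosed_singleton) inter_subset_left

lemma eta_mem_pgfFixedPoints (h0 : ∀ k, 0 ≤ r k) (h1 : HasSum r 1) :
    eta r ∈ pgfFixedPoints r :=
  (isCompact_pgfFixedPoints h0 h1.summable).sInf_mem ⟨1, ⟨zero_le_one, le_rfl⟩, pgf_one h1⟩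

lemma eta_le_of_mem {s : ℝ} (hs : s ∈ pgfFixedPoints r) : eta r ≤ s :=
  csInf_le ⟨0, fun _ ht => ht.1.1⟩ hs

lemma eta_le_of_pgf_le (h0 : ∀ k, 0 ≤ r k) (hr : Summable r) {t : ℝ} (ht : t ∈ Icc 0 1)
    (hpgf : pgf r t ≤ t) : eta r ≤ t := by
  have hcont : ContinuousOn (fun s => pgf r s - s) (Icc 0 t) :=
    ((continuousOn_pgf h0 hr).mono (Icc_subset_Icc le_rfl ht.2)).sub continuousOn_id
  obtain ⟨c, hc, hfix⟩ := intermediate_value_Icc' ht.1 hcont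
    ⟨sub_nonpos.2 hpgf, by simpa [pgf_zero] using h0 0⟩
  exact (eta_le_of_mem ⟨⟨hc.1, hc.2.trans ht.2⟩, sub_eq_zero.1 hfix⟩).trans hc.2

lemma lt_pgf_of_lt_eta (h0 : ∀ k, 0 ≤ r k) (h1 : HasSum r 1) {s : ℝ} (hs0 : 0 ≤ s)
    (hs : s < eta r) : s < pgf r s := by
  by_contra! h
  exact (eta_le_of_pgf_le h0 h1.summable
    ⟨hs0, hs.le.trans (eta_mem_pgfFixedPoints h0 h1).1.2⟩ h).not_gt hs

lemma pgf_lt_of_eta_lt (h0 : ∀ k, 0 ≤ r k) (h1 : HasSum r 1) (hr0 : 0 < r 0) {t : ℝ}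
    (ht : t ∈ Ioo (eta r) 1) : pgf r t < t := by
  obtain ⟨hη, hηfix⟩ := eta_mem_pgfFixedPoints h0 h1
  by_cases hk : ∃ k, 2 ≤ k ∧ 0 < r k
  · have hconv := (strictConvexOn_pgf h0 h1.summable hk).sub_concaveOn
      (concaveOn_id (convex_Icc 0 1))
    have := hconv.lt_on_openSegment hη ⟨zero_le_one, le_rfl⟩ (ht.1.trans ht.2).ne
      (by rwa [openSegment_eq_Ioo (ht.1.trans ht.2)])
    simpa [hηfix, pgf_one h1] using this
  · -- an affine `pgf r` with `r 0 > 0` has `1` as its only fixed point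
    push Not at hk
    have hpgf := pgf_of_forall_two_le_eq_zero fun k hk2 => (hk k hk2).antisymm (h0 k)
    have hsum : r 0 + r 1 = 1 := by simpa [hpgf] using pgf_one h1
    rw [hpgf] at hηfix
    nlinarith [ht.1, ht.2]

end Eta

section Convergence

variable {ι : Type*} {l : Filter ι} {p : ι → ℕ → ℝ} {q : ℕ → ℝ}

/-- Scheffé's lemma: `|x - y| = x + y - 2 min x y`, and `∑ min (p i k) (q k) → ∑ q k` by
dominated convergence. -/
lemma tendsto_tsum_abs_sub (hp : ∀ i, (∀ k, 0 ≤ p i k) ∧ HasSum (p i) 1)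
    (hq : (∀ k, 0 ≤ q k) ∧ HasSum q 1) (hconv : ∀ k, Tendsto (fun i => p i k) l (nhds (q k))) :
    Tendsto (fun i => ∑' k, |p i k - q k|) l (nhds 0) := by
  have hmin : Tendsto (fun i => ∑' k, min (p i k) (q k)) l (nhds 1) := by
    rw [← hq.2.tsum_eq]
    refine tendsto_tsum_of_dominated_convergence hq.2.summable
      (fun k => by simpa using (hconv k).min (tendsto_const_nhds (x := q k)))
      (Eventually.of_forall fun i k => ?_)
    rw [Real.norm_eq_abs, abs_of_nonneg (le_min ((hp i).1 k) (hq.1 k))]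
    exact min_le_right _ _
  have hl1 (i : ι) : ∑' k, |p i k - q k| = 2 - 2 * ∑' k, min (p i k) (q k) := by
    have hsum : Summable fun k => min (p i k) (q k) :=
      hq.2.summable.of_nonneg_of_le (fun k => le_min ((hp i).1 k) (hq.1 k))
        fun k => min_le_right _ _
    have habs (x y : ℝ) : |x - y| = x + y - 2 * min x y := by
      linarith [max_sub_min_eq_abs' x y, min_add_max x y]
    rw [tsum_congr fun k => habs (p i k) (q k),
      ((hp i).2.summable.add hq.2.summable).tsum_sub (hsum.mul_left 2),
      (hp i).2.summable.tsum_add hq.2.summable, tsum_mul_left, (hp i).2.tsum_eq, hq.2.tsum_eq]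
    norm_num
  simpa [hl1] using (hmin.const_mul 2).const_sub 2

lemma tendstoUniformlyOn_pgf (hp : ∀ i, (∀ k, 0 ≤ p i k) ∧ HasSum (p i) 1)
    (hq : (∀ k, 0 ≤ q k) ∧ HasSum q 1) (hconv : ∀ k, Tendsto (fun i => p i k) l (nhds (q k))) :
    TendstoUniformlyOn (fun i => pgf (p i)) (pgf q) l (Icc (-1) 1) := by
  refine Metric.tendstoUniformlyOn_iff.2 fun ε hε => ?_
  filter_upwards [(tendsto_tsum_abs_sub hp hq hconv).eventually_lt_const hε] with i hi s hs
  rw [dist_comm, Real.dist_eq]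
  exact (abs_pgf_sub_pgf_le (hp i).1 hq.1 (hp i).2.summable hq.2.summable
    (abs_le.2 hs)).trans_lt hi

lemma eventually_lt_eta (hp : ∀ i, (∀ k, 0 ≤ p i k) ∧ HasSum (p i) 1)
    (hq : (∀ k, 0 ≤ q k) ∧ HasSum q 1)
    (hunif : TendstoUniformlyOn (fun i => pgf (p i)) (pgf q) l (Icc 0 1)) {s : ℝ}
    (hs : s < eta q) : ∀ᶠ i in l, s < eta (p i) := by
  have hη (i : ι) := eta_mem_pgfFixedPoints (hp i).1 (hp i).2
  rcases lt_or_ge s 0 with hs0 | hs0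
  · exact Eventually.of_forall fun i => hs0.trans_le (hη i).1.1
  have hs1 : s ≤ 1 := hs.le.trans (eta_mem_pgfFixedPoints hq.1 hq.2).1.2
  obtain ⟨x₀, hx₀, hmin⟩ := isCompact_Icc.exists_isMinOn (nonempty_Icc.2 hs0)
    (((continuousOn_pgf hq.1 hq.2.summable).mono (Icc_subset_Icc le_rfl hs1)).sub continuousOn_id)
  have hδ : 0 < pgf q x₀ - x₀ :=
    sub_pos.2 (lt_pgf_of_lt_eta hq.1 hq.2 hx₀.1 (hx₀.2.trans_lt hs))
  filter_upwards [Metric.tendstoUniformlyOn_iff.1 hunif _ hδ] with i hi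
  by_contra! hle
  have hdist := hi _ (hη i).1
  rw [(hη i).2, Real.dist_eq, abs_lt] at hdist
  have hgap : pgf q x₀ - x₀ ≤ pgf q (eta (p i)) - eta (p i) := hmin ⟨(hη i).1.1, hle⟩
  linarith

lemma eventually_eta_lt (hp : ∀ i, (∀ k, 0 ≤ p i k) ∧ HasSum (p i) 1)
    (hq : (∀ k, 0 ≤ q k) ∧ HasSum q 1) (hq0 : 0 < q 0)
    (hunif : TendstoUniformlyOn (fun i => pgf (p i)) (pgf q) l (Icc 0 1)) {b : ℝ}
    (hb : eta q < b) : ∀ᶠ i in l, eta (p i) < b := by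
  have hη (i : ι) := eta_mem_pgfFixedPoints (hp i).1 (hp i).2
  rcases lt_or_ge (eta q) 1 with hη1 | hη1
  · obtain ⟨t, hηt, htb⟩ := exists_between (lt_min hb hη1)
    have ht : t ∈ Ioo (eta q) 1 := ⟨hηt, htb.trans_le (min_le_right _ _)⟩
    have ht0 : 0 ≤ t := (eta_mem_pgfFixedPoints hq.1 hq.2).1.1.trans hηt.le
    filter_upwards [(hunif.tendsto_at ⟨ht0, ht.2.le⟩).eventually_lt_const
      (pgf_lt_of_eta_lt hq.1 hq.2 hq0 ht)] with i hi
    exact (eta_le_of_pgf_le (hp i).1 (hp i).2.summable ⟨ht0, ht.2.le⟩ hi.le).trans_lt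
      (htb.trans_le (min_le_left _ _))
  · exact Eventually.of_forall fun i => ((hη i).1.2.trans hη1).trans_lt hb

end Convergence

/-- If probability distributions `pₙ` on ℤ₊ converge in distribution to `p`
(equivalently, pointwise) and `p(0) > 0`, then `η(pₙ) → η(p)`. -/
theorem eta_tendsto (p : ℕ → ℕ → ℝ) (q : ℕ → ℝ)
    (hp : ∀ n, (∀ k, 0 ≤ p n k) ∧ HasSum (p n) 1)
    (hq : (∀ k, 0 ≤ q k) ∧ HasSum q 1)
    (hconv : ∀ k, Tendsto (fun n => p n k) atTop (nhds (q k)))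
    (h0 : 0 < q 0) :
    Tendsto (fun n => eta (p n)) atTop (nhds (eta q)) := by
  have hunif := (tendstoUniformlyOn_pgf hp hq hconv).mono
    (Icc_subset_Icc (by norm_num : (-1 : ℝ) ≤ 0) le_rfl)
  exact tendsto_order.2
    ⟨fun a ha => eventually_lt_eta hp hq hunif ha, fun b hb => eventually_eta_lt hp hq h0 hunif hb⟩
end

section
/- For any probability distribution p on ℤ₊ with finite nonzero mean λ, the configuration model branching functional satisfies ζ_CM(p) ≤ λ/2, where ζ_CM(p) = 1 − G_p(η(p∘)). -/
/-- Mean `m₁(p) = ∑ k p(k)`. -/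
noncomputable def meanNat (p : ℕ → ℝ) : ℝ := ∑' k : ℕ, (k : ℝ) * p k

/-- Downshifted size biasing `p∘(k) = (k+1) p(k+1) / m₁(p)`. -/
noncomputable def downshift (p : ℕ → ℝ) : ℕ → ℝ :=
  fun k => ((k : ℝ) + 1) * p (k + 1) / meanNat p

/-- Configuration model branching functional `ζ_CM(p) = 1 - G_p(η(p∘))`. -/
noncomputable def zetaCM (p : ℕ → ℝ) : ℝ := 1 - pgf p (eta (downshift p))

/-
Termwise, `1 - x ^ (n + 1) = (1 - x) ∑_{i ≤ n} x ^ i`, and pairing `x ^ i` with `x ^ (n - i)`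
bounds the geometric sum by the trapezoid value `(n + 1) (1 + x ^ n) / 2`. Summing against `p`
gives `1 - G_p(x) ≤ λ (1 - x) (1 + G_{p∘}(x)) / 2` on `[0, 1]`, the trapezoid rule for the convex
function `G_{p∘}` in `1 - G_p(x) = λ ∫_x^1 G_{p∘}`. At the fixed point `x = η(p∘)` the right-hand
side is `λ (1 - η²) / 2 ≤ λ / 2`.
-/

open Finset in
theorem geom_sum_le_trapezoid {x : ℝ} (hx0 : 0 ≤ x) (hx1 : x ≤ 1) (n : ℕ) :
    ∑ i ∈ range (n + 1), x ^ i ≤ ((n : ℝ) + 1) / 2 * (1 + x ^ n) := by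
  have hpair : ∀ i ∈ range (n + 1), x ^ i + x ^ (n - i) ≤ 1 + x ^ n := by
    intro i hi
    have hmul : x ^ i * x ^ (n - i) = x ^ n := by
      rw [← pow_add, Nat.add_sub_cancel' (mem_range_succ_iff.mp hi)]
    -- `(1 - x ^ i) (1 - x ^ (n - i)) ≥ 0`
    nlinarith [pow_le_one₀ hx0 hx1 (n := i), pow_le_one₀ hx0 hx1 (n := n - i)]
  have hreflect : ∑ i ∈ range (n + 1), x ^ (n - i) = ∑ i ∈ range (n + 1), x ^ i :=
    sum_range_reflect (fun i => x ^ i) (n + 1)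
  have hsum := sum_le_sum hpair
  rw [sum_add_distrib, hreflect, sum_const, card_range, nsmul_eq_mul] at hsum
  push_cast at hsum
  linarith

theorem one_sub_pow_succ_le {x : ℝ} (hx0 : 0 ≤ x) (hx1 : x ≤ 1) (n : ℕ) :
    1 - x ^ (n + 1) ≤ (1 - x) / 2 * (((n : ℝ) + 1) * (1 + x ^ n)) :=
  calc 1 - x ^ (n + 1) = (1 - x) * ∑ i ∈ Finset.range (n + 1), x ^ i := by
        rw [← neg_sub, ← geom_sum_mul, mul_comm]; ring
    _ ≤ (1 - x) * (((n : ℝ) + 1) / 2 * (1 + x ^ n)) :=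
        mul_le_mul_of_nonneg_left (geom_sum_le_trapezoid hx0 hx1 n) (by linarith)
    _ = (1 - x) / 2 * (((n : ℝ) + 1) * (1 + x ^ n)) := by ring

section

variable {p : ℕ → ℝ}

theorem summable_mul_pow_of_nonneg (hnn : ∀ k, 0 ≤ p k) (hp : Summable p) {x : ℝ}
    (hx0 : 0 ≤ x) (hx1 : x ≤ 1) : Summable fun k => p k * x ^ k :=
  hp.of_nonneg_of_le (fun k => mul_nonneg (hnn k) (pow_nonneg hx0 k))
    fun k => mul_le_of_le_one_right (hnn k) (pow_le_one₀ hx0 hx1)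

theorem continuousOn_pgf_s7 (hnn : ∀ k, 0 ≤ p k) (hp : Summable p) :
    ContinuousOn (pgf p) (Set.Icc 0 1) := by
  refine continuousOn_tsum (fun k => (continuous_const.mul (continuous_pow k)).continuousOn)
    hp fun k x hx => ?_
  rw [Real.norm_eq_abs, abs_mul, abs_of_nonneg (hnn k), abs_of_nonneg (pow_nonneg hx.1 k)]
  exact mul_le_of_le_one_right (hnn k) (pow_le_one₀ hx.1 hx.2)

/-- `1` is a fixed point, so the infimum defining `eta` is over a nonempty compact set. -/
theorem eta_mem_fixedPoints (hnn : ∀ k, 0 ≤ p k) (hsum : HasSum p 1) :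
    eta p ∈ {s : ℝ | s ∈ Set.Icc (0 : ℝ) 1 ∧ pgf p s = s} := by
  have hclosed : IsClosed {s : ℝ | s ∈ Set.Icc (0 : ℝ) 1 ∧ pgf p s = s} := by
    have hcont := (continuousOn_pgf_s7 hnn hsum.summable).sub continuousOn_id
    convert hcont.preimage_isClosed_of_isClosed isClosed_Icc (isClosed_singleton (x := 0)) using 1
    ext; simp [sub_eq_zero]
  have hone : pgf p 1 = 1 := by simpa [pgf] using hsum.tsum_eq
  exact hclosed.csInf_mem ⟨1, ⟨zero_le_one, le_rfl⟩, hone⟩ ⟨0, fun s hs => hs.1.1⟩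

theorem hasSum_succ_mul_succ (hmom : Summable fun k : ℕ => (k : ℝ) * p k) :
    HasSum (fun k : ℕ => ((k : ℝ) + 1) * p (k + 1)) (meanNat p) := by
  have h := (hasSum_nat_add_iff' 1).mpr hmom.hasSum
  simpa [meanNat] using h

theorem meanNat_nonneg (hnn : ∀ k, 0 ≤ p k) : 0 ≤ meanNat p :=
  tsum_nonneg fun k => mul_nonneg k.cast_nonneg (hnn k)

theorem downshift_nonneg (hnn : ∀ k, 0 ≤ p k) (k : ℕ) : 0 ≤ downshift p k :=
  div_nonneg (mul_nonneg (by positivity) (hnn (k + 1))) (meanNat_nonneg hnn)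

theorem hasSum_downshift (hmom : Summable fun k : ℕ => (k : ℝ) * p k) (hmean : meanNat p ≠ 0) :
    HasSum (downshift p) 1 := by
  have h := (hasSum_succ_mul_succ hmom).div_const (meanNat p)
  rwa [div_self hmean] at h

theorem hasSum_succ_mul_succ_mul_pow (hnn : ∀ k, 0 ≤ p k)
    (hmom : Summable fun k : ℕ => (k : ℝ) * p k) (hmean : meanNat p ≠ 0) {x : ℝ}
    (hx0 : 0 ≤ x) (hx1 : x ≤ 1) :
    HasSum (fun k : ℕ => ((k : ℝ) + 1) * p (k + 1) * x ^ k)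
      (meanNat p * pgf (downshift p) x) := by
  have hs := summable_mul_pow_of_nonneg (fun k : ℕ => mul_nonneg (by positivity) (hnn (k + 1)))
    (hasSum_succ_mul_succ hmom).summable hx0 hx1
  convert hs.hasSum using 1
  rw [pgf, ← tsum_mul_left]
  congr with k
  simp only [downshift]
  field_simp

theorem one_sub_pgf_le (hnn : ∀ k, 0 ≤ p k) (hsum : HasSum p 1)
    (hmom : Summable fun k : ℕ => (k : ℝ) * p k) (hmean : meanNat p ≠ 0) {x : ℝ}
    (hx0 : 0 ≤ x) (hx1 : x ≤ 1) :
    1 - pgf p x ≤ (1 - x) / 2 * (meanNat p + meanNat p * pgf (downshift p) x) := by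
  have hlhs : HasSum (fun k => p (k + 1) * (1 - x ^ (k + 1))) (1 - pgf p x) := by
    have h := hsum.sub (summable_mul_pow_of_nonneg hnn hsum.summable hx0 hx1).hasSum
    simp only [← mul_one_sub] at h
    simpa [pgf] using (hasSum_nat_add_iff' 1).mpr h
  have hrhs := ((hasSum_succ_mul_succ hmom).add
    (hasSum_succ_mul_succ_mul_pow hnn hmom hmean hx0 hx1)).mul_left ((1 - x) / 2)
  refine hasSum_le (fun k => ?_) hlhs hrhs
  calc p (k + 1) * (1 - x ^ (k + 1))
      ≤ p (k + 1) * ((1 - x) / 2 * (((k : ℝ) + 1) * (1 + x ^ k))) :=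
        mul_le_mul_of_nonneg_left (one_sub_pow_succ_le hx0 hx1 k) (hnn (k + 1))
    _ = _ := by ring

end

/-- For any probability distribution `p` on ℤ₊ with finite nonzero mean `λ`,
`ζ_CM(p) ≤ λ/2`. -/
theorem zetaCM_le_half_mean (p : ℕ → ℝ) (hnn : ∀ k, 0 ≤ p k) (hsum : HasSum p 1)
    (hmom : Summable (fun k : ℕ => (k : ℝ) * p k)) (hmean : meanNat p ≠ 0) :
    zetaCM p ≤ meanNat p / 2 := by
  obtain ⟨⟨hη0, hη1⟩, hfix⟩ :=
    eta_mem_fixedPoints (downshift_nonneg hnn) (hasSum_downshift hmom hmean)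
  have hη_sq := mul_nonneg (meanNat_nonneg hnn) (sq_nonneg (eta (downshift p)))
  calc zetaCM p
      ≤ (1 - eta (downshift p)) / 2 *
          (meanNat p + meanNat p * pgf (downshift p) (eta (downshift p))) :=
        one_sub_pgf_le hnn hsum hmom hmean hη0 hη1
    _ = meanNat p / 2 - meanNat p * eta (downshift p) ^ 2 / 2 := by rw [hfix]; ring
    _ ≤ meanNat p / 2 := by linarith
end

section
/- For any probability distribution p on ℤ₊ with finite nonzero mean λ, ζ_CM(p) ≤ 1 − p(0) − p(1)²/λ, where ζ_CM(p) = 1 − G_p(η(p∘)). -/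
/-- For any probability distribution `p` on ℤ₊ with finite nonzero mean `λ`,
`ζ_CM(p) ≤ 1 - p(0) - p(1)²/λ`. -/
theorem zetaCM_crude_upper2 (p : ℕ → ℝ) (hnn : ∀ k, 0 ≤ p k) (hsum : HasSum p 1)
    (hmom : Summable (fun k : ℕ => (k : ℝ) * p k)) (hmean : meanNat p ≠ 0) :
    zetaCM p ≤ 1 - p 0 - (p 1) ^ 2 / meanNat p := by
  set lam := meanNat p with hlam
  have hlam_nonneg : 0 ≤ lam := tsum_nonneg fun k => mul_nonneg (Nat.cast_nonneg k) (hnn k)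
  have hlam_pos : 0 < lam := lt_of_le_of_ne hlam_nonneg (Ne.symm hmean)
  set q := downshift p with hq
  have hqnn : ∀ k, 0 ≤ q k := fun k =>
    div_nonneg (mul_nonneg (by positivity) (hnn (k + 1))) hlam_nonneg
  -- summability of the shifted moments
  have hshift : Summable (fun k : ℕ => ((k : ℝ) + 1) * p (k + 1)) := by
    have := (summable_nat_add_iff 1).2 hmom
    convert this using 2 with k
    · rfl
    push_cast
    ring
  have hshift_sum : ∑' k : ℕ, ((k : ℝ) + 1) * p (k + 1) = lam := by
    have h0 := Summable.tsum_eq_zero_add hmom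
    simp only [Nat.cast_zero, zero_mul, zero_add] at h0
    rw [hlam, meanNat, h0]
    apply tsum_congr
    intro k
    push_cast
    ring
  have hqsum : Summable q := by
    have : Summable (fun k : ℕ => ((k : ℝ) + 1) * p (k + 1) / lam) := by
      simpa using hshift.div_const lam
    exact this
  have hqtot : ∑' k, q k = 1 := by
    have : ∑' k, q k = (∑' k : ℕ, ((k : ℝ) + 1) * p (k + 1)) / lam := tsum_div_const
    rw [this, hshift_sum, div_self hmean]
  -- the set of fixed points
  set S := {s : ℝ | s ∈ Set.Icc (0 : ℝ) 1 ∧ pgf q s = s} with hS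
  have h1S : (1 : ℝ) ∈ S := by
    constructor
    · exact ⟨zero_le_one, le_refl 1⟩
    · simp only [pgf, one_pow, mul_one]
      exact hqtot
  have hbdd : BddBelow S := ⟨0, fun s hs => hs.1.1⟩
  have hsummem : ∀ s ∈ Set.Icc (0:ℝ) 1, Summable (fun k : ℕ => q k * s ^ k) := by
    intro s hs
    apply Summable.of_nonneg_of_le
      (fun k => mul_nonneg (hqnn k) (pow_nonneg hs.1 k))
      (fun k => by
        have : s ^ k ≤ 1 := pow_le_one₀ hs.1 hs.2
        calc q k * s ^ k ≤ q k * 1 := mul_le_mul_of_nonneg_left this (hqnn k)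
          _ = q k := mul_one _) hqsum
  have hq0_le : ∀ s ∈ S, q 0 ≤ s := by
    intro s hs
    have hsm := hsummem s hs.1
    have : q 0 * s ^ 0 ≤ pgf q s :=
      Summable.le_tsum hsm 0 (fun i _ => mul_nonneg (hqnn i) (pow_nonneg hs.1.1 i))
    rw [pow_zero, mul_one] at this
    exact this.trans_eq hs.2
  have hSne : S.Nonempty := ⟨1, h1S⟩
  have heta0 : q 0 ≤ eta q := le_csInf hSne hq0_le
  have heta_nonneg : 0 ≤ eta q := le_csInf hSne (fun s hs => hs.1.1)
  have heta_le1 : eta q ≤ 1 := csInf_le hbdd h1S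
  -- lower bound on pgf p (eta q)
  have hpsum : Summable (fun k : ℕ => p k * (eta q) ^ k) := by
    apply Summable.of_nonneg_of_le
      (fun k => mul_nonneg (hnn k) (pow_nonneg heta_nonneg k))
      (fun k => by
        have : (eta q) ^ k ≤ 1 := pow_le_one₀ heta_nonneg heta_le1
        calc p k * (eta q) ^ k ≤ p k * 1 := mul_le_mul_of_nonneg_left this (hnn k)
          _ = p k := mul_one _) hsum.summable
  have hge : p 0 + p 1 * eta q ≤ pgf p (eta q) := by
    have := Summable.sum_le_tsum ({0, 1} : Finset ℕ)
      (fun i _ => mul_nonneg (hnn i) (pow_nonneg heta_nonneg i)) hpsum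
    simpa [pgf, Finset.sum_insert, pow_zero, pow_one] using this
  have hq0 : q 0 = p 1 / lam := by
    simp [hq, downshift, hlam]
  have h2 : p 0 + (p 1) ^ 2 / lam ≤ pgf p (eta q) := by
    refine le_trans ?_ hge
    have : (p 1) ^ 2 / lam ≤ p 1 * eta q := by
      have : p 1 * (p 1 / lam) ≤ p 1 * eta q := by
        apply mul_le_mul_of_nonneg_left _ (hnn 1)
        rw [← hq0]; exact heta0
      calc (p 1) ^ 2 / lam = p 1 * (p 1 / lam) := by ring
        _ ≤ p 1 * eta q := this
    linarith
  rw [zetaCM]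
  linarith
end

section
/- Let p ≤_icv q be distributions on ℤ₊ with finite nonzero means such that p(i) = q(i) for all i ∈ {0,…,ℓ}. Then the generating functions of the downshifted size biasings satisfy G_{p∘}(s) ≥ G_{q∘}(s) for all s ∈ [0, e^{−2/(ℓ+1)}]. -/
/-- The increasing concave order `p ≤_icv q`: all sums of increasing concave
functions (such that the sums exist) are ordered. -/
def icvLE (p q : ℕ → ℝ) : Prop :=
  ∀ φ : ℝ → ℝ, Monotone φ → ConcaveOn ℝ Set.univ φ →
    Summable (fun k : ℕ => φ k * p k) → Summable (fun k : ℕ => φ k * q k) →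
    ∑' k : ℕ, φ k * p k ≤ ∑' k : ℕ, φ k * q k

open Real Set

noncomputable def gfun (t x : ℝ) : ℝ := -x * Real.exp ((x - 1) * t)
noncomputable def gder (t x : ℝ) : ℝ := -(1 + x * t) * Real.exp ((x - 1) * t)
noncomputable def phiAux (t c x : ℝ) : ℝ :=
  if x ≤ c then gfun t c + gder t c * (x - c) else gfun t x
noncomputable def psiAux (t c x : ℝ) : ℝ := if x ≤ c then gder t c else gder t x

lemma gfun_hasDerivAt (t x : ℝ) : HasDerivAt (gfun t) (gder t x) x := by
  have h1 : HasDerivAt (fun x : ℝ => (x - 1) * t) t x := by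
    simpa using ((hasDerivAt_id x).sub_const 1).mul_const t
  have h3 := (hasDerivAt_neg x).mul h1.exp
  show HasDerivAt (fun y => -y * Real.exp ((y - 1) * t)) (gder t x) x
  refine h3.congr_deriv ?_
  unfold gder
  ring

lemma gder_hasDerivAt (t x : ℝ) :
    HasDerivAt (gder t) (-t * (2 + x * t) * Real.exp ((x - 1) * t)) x := by
  have h1 : HasDerivAt (fun x : ℝ => (x - 1) * t) t x := by
    simpa using ((hasDerivAt_id x).sub_const 1).mul_const t
  have h0 : HasDerivAt (fun x : ℝ => -(1 + x * t)) (-t) x := by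
    have h00 : HasDerivAt (fun x : ℝ => 1 + x * t) t x := by
      simpa using ((hasDerivAt_id x).mul_const t).const_add 1
    exact h00.neg
  have h3 := h0.mul h1.exp
  show HasDerivAt (fun y => -(1 + y * t) * Real.exp ((y - 1) * t)) _ x
  refine h3.congr_deriv ?_
  ring

lemma phiAux_hasDerivAt (t c x : ℝ) : HasDerivAt (phiAux t c) (psiAux t c x) x := by
  rcases lt_trichotomy x c with hx | rfl | hx
  · have haff : HasDerivAt (fun y : ℝ => gfun t c + gder t c * (y - c)) (gder t c) x := by
      simpa using (((hasDerivAt_id x).sub_const c).const_mul (gder t c)).const_add (gfun t c)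
    have heq : phiAux t c =ᶠ[nhds x] fun y => gfun t c + gder t c * (y - c) := by
      filter_upwards [Iio_mem_nhds hx] with y (hy : y < c)
      simp [phiAux, le_of_lt hy]
    have := haff.congr_of_eventuallyEq heq
    simpa [psiAux, le_of_lt hx] using this
  · rw [hasDerivAt_iff_isLittleO]
    have hG := hasDerivAt_iff_isLittleO.mp (gfun_hasDerivAt t x)
    have hphix : phiAux t x x = gfun t x := by simp [phiAux]
    have hpsix : psiAux t x x = gder t x := by simp [psiAux]
    rw [hpsix]
    refine (Asymptotics.isBigO_of_le _ ?_).trans_isLittleO hG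
    intro y
    by_cases hy : y ≤ x
    · have h0 : phiAux t x y - phiAux t x x - (y - x) • gder t x = 0 := by
        rw [hphix]
        simp only [phiAux, if_pos hy, smul_eq_mul]
        ring
      rw [h0]
      simp
    · have h0 : phiAux t x y - phiAux t x x - (y - x) • gder t x
          = gfun t y - gfun t x - (y - x) • gder t x := by
        rw [hphix]
        simp only [phiAux, if_neg hy]
      rw [h0]
  · have heq : phiAux t c =ᶠ[nhds x] gfun t := by
      filter_upwards [Ioi_mem_nhds hx] with y (hy : c < y)
      simp [phiAux, not_le.mpr hy]
    have := (gfun_hasDerivAt t x).congr_of_eventuallyEq heq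
    simpa [psiAux, not_le.mpr hx] using this

section Props

variable {t c : ℝ} (ht : t < 0) (hc : 1 ≤ c) (hct : c * t ≤ -2)

include ht hct in
lemma gder_nonneg' {x : ℝ} (hx : c ≤ x) : 0 ≤ gder t x := by
  have hxt : x * t ≤ c * t := mul_le_mul_of_nonpos_right hx (le_of_lt ht)
  have h1 : 1 + x * t ≤ 0 := by linarith
  have := Real.exp_pos ((x - 1) * t)
  unfold gder
  nlinarith

include ht hct in
lemma gder_antitoneOn : AntitoneOn (gder t) (Ici c) := by
  have hdiff : Differentiable ℝ (gder t) :=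
    fun x => (gder_hasDerivAt t x).differentiableAt
  refine antitoneOn_of_deriv_nonpos (convex_Ici c) hdiff.continuous.continuousOn
    hdiff.differentiableOn ?_
  intro x hx
  rw [interior_Ici] at hx
  rw [(gder_hasDerivAt t x).deriv]
  have hxt : x * t ≤ c * t := mul_le_mul_of_nonpos_right (le_of_lt hx) (le_of_lt ht)
  have h2 : 2 + x * t ≤ 0 := by linarith
  have h3 : -t * (2 + x * t) ≤ 0 := mul_nonpos_of_nonneg_of_nonpos (by linarith) h2
  exact mul_nonpos_of_nonpos_of_nonneg h3 (Real.exp_pos _).le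

include ht hct in
lemma psiAux_nonneg (x : ℝ) : 0 ≤ psiAux t c x := by
  unfold psiAux
  split
  · exact gder_nonneg' ht hct le_rfl
  · exact gder_nonneg' ht hct (le_of_not_ge ‹_›)

include ht hct in
lemma psiAux_antitone : Antitone (psiAux t c) := by
  intro x y hxy
  unfold psiAux
  by_cases hy : y ≤ c
  · rw [if_pos hy, if_pos (hxy.trans hy)]
  · rw [if_neg hy]
    have hy' : c ≤ y := le_of_not_ge hy
    by_cases hx : x ≤ c
    · rw [if_pos hx]
      exact gder_antitoneOn ht hct self_mem_Ici hy' hy'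
    · rw [if_neg hx]
      exact gder_antitoneOn ht hct (le_of_not_ge hx) hy' hxy

lemma phiAux_differentiable : Differentiable ℝ (phiAux t c) :=
  fun x => (phiAux_hasDerivAt t c x).differentiableAt

lemma deriv_phiAux : deriv (phiAux t c) = psiAux t c :=
  funext fun x => (phiAux_hasDerivAt t c x).deriv

include ht hct in
lemma phiAux_monotone : Monotone (phiAux t c) := by
  refine monotone_of_deriv_nonneg phiAux_differentiable ?_
  rw [deriv_phiAux]
  exact psiAux_nonneg ht hct

include ht hct in
lemma phiAux_concave : ConcaveOn ℝ Set.univ (phiAux t c) := by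
  refine Antitone.concaveOn_univ_of_deriv phiAux_differentiable ?_
  rw [deriv_phiAux]
  exact psiAux_antitone ht hct

include ht hc hct in
lemma phiAux_nonpos {x : ℝ} (hx : 0 ≤ x) : phiAux t c x ≤ 0 := by
  unfold phiAux
  split
  · have h1 : gfun t c ≤ 0 := by
      unfold gfun
      have := Real.exp_pos ((c - 1) * t)
      nlinarith
    have h2 : gder t c * (x - c) ≤ 0 := by
      apply mul_nonpos_of_nonneg_of_nonpos (gder_nonneg' ht hct le_rfl)
      linarith [‹x ≤ c›]
    linarith
  · unfold gfun
    have := Real.exp_pos ((x - 1) * t)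
    nlinarith

lemma phiAux_eq_of_ge {x : ℝ} (hx : c ≤ x) : phiAux t c x = gfun t x := by
  unfold phiAux
  split
  · have : x = c := le_antisymm ‹_› hx
    simp [this]
  · rfl

end Props

/-- If `p ≤_icv q` and `p(i) = q(i)` for `i ∈ {0,…,ℓ}`, then the generating
functions of the downshifted size biasings satisfy `G_{p∘}(s) ≥ G_{q∘}(s)`
for all `s ∈ [0, e^{-2/(ℓ+1)}]`. -/
theorem pgf_downshift_ge (p q : ℕ → ℝ) (l : ℕ)
    (hp : (∀ k, 0 ≤ p k) ∧ HasSum p 1) (hq : (∀ k, 0 ≤ q k) ∧ HasSum q 1)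
    (hpm : Summable (fun k : ℕ => (k : ℝ) * p k)) (hpm0 : meanNat p ≠ 0)
    (hqm : Summable (fun k : ℕ => (k : ℝ) * q k)) (hqm0 : meanNat q ≠ 0)
    (hicv : icvLE p q) (heq : ∀ i ≤ l, p i = q i) :
    ∀ s ∈ Set.Icc (0 : ℝ) (Real.exp (-2 / ((l : ℝ) + 1))),
      pgf (downshift q) s ≤ pgf (downshift p) s := by
  obtain ⟨hp0, hpsum⟩ := hp
  obtain ⟨hq0, hqsum⟩ := hq
  have hmp : 0 < meanNat p :=
    lt_of_le_of_ne (tsum_nonneg fun k => mul_nonneg (Nat.cast_nonneg k) (hp0 k)) (Ne.symm hpm0)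
  have hmq : 0 < meanNat q :=
    lt_of_le_of_ne (tsum_nonneg fun k => mul_nonneg (Nat.cast_nonneg k) (hq0 k)) (Ne.symm hqm0)
  have hmean : meanNat p ≤ meanNat q := by
    have := hicv id monotone_id (concaveOn_id convex_univ)
      (by simpa using hpm) (by simpa using hqm)
    simpa [meanNat] using this
  have Sp1 : Summable (fun k : ℕ => ((k : ℝ) + 1) * p (k + 1)) :=
    ((summable_nat_add_iff 1).2 hpm).congr fun n => by push_cast; ring
  have Sq1 : Summable (fun k : ℕ => ((k : ℝ) + 1) * q (k + 1)) :=
    ((summable_nat_add_iff 1).2 hqm).congr fun n => by push_cast; ring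
  intro s hs
  obtain ⟨hs0, hsle⟩ := hs
  have hs1 : s < 1 := by
    refine lt_of_le_of_lt hsle ?_
    have hneg : -2 / ((l : ℝ) + 1) < 0 := by
      apply div_neg_of_neg_of_pos (by norm_num)
      positivity
    calc Real.exp (-2 / ((l : ℝ) + 1)) < Real.exp 0 := Real.exp_lt_exp.mpr hneg
      _ = 1 := Real.exp_zero
  have Sp2 : Summable (fun k : ℕ => ((k : ℝ) + 1) * p (k + 1) * s ^ k) := by
    refine Summable.of_nonneg_of_le
      (fun k => mul_nonneg (mul_nonneg (by positivity) (hp0 _)) (pow_nonneg hs0 k))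
      (fun k => ?_) Sp1
    exact mul_le_of_le_one_right (mul_nonneg (by positivity) (hp0 _)) (pow_le_one₀ hs0 hs1.le)
  have Sq2 : Summable (fun k : ℕ => ((k : ℝ) + 1) * q (k + 1) * s ^ k) := by
    refine Summable.of_nonneg_of_le
      (fun k => mul_nonneg (mul_nonneg (by positivity) (hq0 _)) (pow_nonneg hs0 k))
      (fun k => ?_) Sq1
    exact mul_le_of_le_one_right (mul_nonneg (by positivity) (hq0 _)) (pow_le_one₀ hs0 hs1.le)
  have hpgf_p : pgf (downshift p) s = (∑' k : ℕ, ((k : ℝ) + 1) * p (k + 1) * s ^ k) / meanNat p := by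
    unfold pgf downshift
    rw [← tsum_div_const]
    exact tsum_congr fun k => by ring
  have hpgf_q : pgf (downshift q) s = (∑' k : ℕ, ((k : ℝ) + 1) * q (k + 1) * s ^ k) / meanNat q := by
    unfold pgf downshift
    rw [← tsum_div_const]
    exact tsum_congr fun k => by ring
  suffices hB : (∑' k : ℕ, ((k : ℝ) + 1) * q (k + 1) * s ^ k)
      ≤ (∑' k : ℕ, ((k : ℝ) + 1) * p (k + 1) * s ^ k) by
    rw [hpgf_p, hpgf_q]
    have hBp : 0 ≤ ∑' k : ℕ, ((k : ℝ) + 1) * p (k + 1) * s ^ k :=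
      tsum_nonneg fun k => mul_nonneg (mul_nonneg (by positivity) (hp0 _)) (pow_nonneg hs0 k)
    exact div_le_div₀ hBp hB hmp hmean
  rcases hs0.eq_or_lt with rfl | hspos
  · -- s = 0
    have hterm : ∀ r : ℕ → ℝ, ∀ k : ℕ, k ≠ 0 → ((k : ℝ) + 1) * r (k + 1) * (0:ℝ) ^ k = 0 := by
      intro r k hk
      rw [zero_pow hk, mul_zero]
    rw [tsum_eq_single 0 (hterm p), tsum_eq_single 0 (hterm q)]
    simp only [Nat.cast_zero, zero_add, pow_zero, one_mul, mul_one]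
    -- goal : q 1 ≤ p 1
    rcases Nat.eq_zero_or_pos l with rfl | hl
    · -- l = 0 : use φ x = min x 2
      set φ : ℝ → ℝ := fun x => min x 2 with hφ
      have hmono : Monotone φ := fun a b hab => min_le_min hab le_rfl
      have hconc : ConcaveOn ℝ Set.univ φ :=
        (concaveOn_id convex_univ).inf (concaveOn_const 2 convex_univ)
      have hbnd : ∀ r : ℕ → ℝ, (∀ k, 0 ≤ r k) → Summable r →
          Summable (fun k : ℕ => φ k * r k) := by
        intro r hr hsum
        refine Summable.of_nonneg_of_le
          (fun k => mul_nonneg (le_min (Nat.cast_nonneg k) (by norm_num)) (hr k))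
          (fun k => mul_le_mul_of_nonneg_right (min_le_right _ _) (hr k)) (hsum.mul_left 2)
      have hcomp : ∀ r : ℕ → ℝ, HasSum r 1 → Summable (fun k : ℕ => φ k * r k) →
          ∑' k : ℕ, φ k * r k = 2 - 2 * r 0 - r 1 := by
        intro r hr hsum
        have h2 : ∑' k : ℕ, r (k + 2) = 1 - r 0 - r 1 := by
          have := Summable.sum_add_tsum_nat_add (f := r) 2 hr.summable
          rw [hr.tsum_eq] at this
          simp [Finset.sum_range_succ] at this
          linarith
        rw [← Summable.sum_add_tsum_nat_add (f := fun k : ℕ => φ k * r k) 2 hsum]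
        have htail : ∑' k : ℕ, φ (↑(k + 2)) * r (k + 2) = 2 * (1 - r 0 - r 1) := by
          rw [← h2, ← tsum_mul_left]
          refine tsum_congr fun k => ?_
          have : φ (↑(k + 2)) = 2 := by
            simp only [hφ]
            rw [min_eq_right]
            push_cast
            linarith [Nat.cast_nonneg (α := ℝ) k]
          rw [this]
        rw [htail]
        simp [Finset.sum_range_succ, hφ]
        ring
      have hiq := hicv φ hmono hconc (hbnd p hp0 hpsum.summable) (hbnd q hq0 hqsum.summable)
      rw [hcomp p hpsum (hbnd p hp0 hpsum.summable), hcomp q hqsum (hbnd q hq0 hqsum.summable)]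
        at hiq
      have h00 : p 0 = q 0 := heq 0 le_rfl
      linarith
    · exact (heq 1 hl).symm.le
  · -- 0 < s
    set t := Real.log s with htdef
    set c := (l : ℝ) + 1 with hcdef
    have hcpos : (0:ℝ) < c := by positivity
    have hc1 : (1:ℝ) ≤ c := by
      rw [hcdef]
      linarith [Nat.cast_nonneg (α := ℝ) l]
    have hts : Real.exp t = s := Real.exp_log hspos
    have htle : t ≤ -2 / c := (Real.log_le_iff_le_exp hspos).mpr hsle
    have hct : c * t ≤ -2 := by
      have h2 : c * t ≤ c * (-2 / c) := mul_le_mul_of_nonneg_left htle hcpos.le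
      have h3 : c * (-2 / c) = -2 := by
        field_simp
      exact h2.trans h3.le
    have ht : t < 0 := by nlinarith
    have hφnat : ∀ k : ℕ, phiAux t c (↑(k + (l + 1))) = -(((k + (l + 1) : ℕ) : ℝ) * s ^ (k + l)) := by
      intro k
      have hge : c ≤ ((k + (l + 1) : ℕ) : ℝ) := by
        rw [hcdef]
        push_cast
        linarith [Nat.cast_nonneg (α := ℝ) k]
      rw [phiAux_eq_of_ge hge]
      unfold gfun
      have h1 : (((k + (l + 1) : ℕ) : ℝ) - 1) * t = ((k + l : ℕ) : ℝ) * t := by push_cast; ring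
      rw [h1, Real.exp_nat_mul, hts]
      ring
    have hφbdd : ∀ k : ℕ, |phiAux t c ↑k| ≤ -phiAux t c 0 := by
      intro k
      have h1 : phiAux t c 0 ≤ phiAux t c ↑k := phiAux_monotone ht hct (Nat.cast_nonneg k)
      have h2 : phiAux t c ↑k ≤ 0 := phiAux_nonpos ht hc1 hct (Nat.cast_nonneg k)
      have h3 : phiAux t c 0 ≤ 0 := phiAux_nonpos ht hc1 hct le_rfl
      rw [abs_le]
      constructor <;> linarith
    have hSφ : ∀ r : ℕ → ℝ, (∀ k, 0 ≤ r k) → Summable r →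
        Summable (fun k : ℕ => phiAux t c ↑k * r k) := by
      intro r hr hsum
      refine Summable.of_abs (Summable.of_nonneg_of_le (fun k => abs_nonneg _) (fun k => ?_)
        (hsum.mul_left (-phiAux t c 0)))
      rw [abs_mul, abs_of_nonneg (hr k)]
      exact mul_le_mul_of_nonneg_right (hφbdd k) (hr k)
    have hSp := hSφ p hp0 hpsum.summable
    have hSq := hSφ q hq0 hqsum.summable
    have hicv' := hicv (phiAux t c) (phiAux_monotone ht hct) (phiAux_concave ht hct) hSp hSq
    rw [← Summable.sum_add_tsum_nat_add (f := fun k : ℕ => phiAux t c ↑k * p k) (l + 1) hSp,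
        ← Summable.sum_add_tsum_nat_add (f := fun k : ℕ => phiAux t c ↑k * q k) (l + 1) hSq] at hicv'
    have hfin : (∑ i ∈ Finset.range (l + 1), phiAux t c ↑i * p i)
        = ∑ i ∈ Finset.range (l + 1), phiAux t c ↑i * q i :=
      Finset.sum_congr rfl fun i hi => by
        rw [heq i (Nat.lt_succ_iff.mp (Finset.mem_range.mp hi))]
    have htail : ∑' k : ℕ, phiAux t c ↑(k + (l + 1)) * p (k + (l + 1))
        ≤ ∑' k : ℕ, phiAux t c ↑(k + (l + 1)) * q (k + (l + 1)) := by linarith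
    have hTp : ∑' k : ℕ, phiAux t c ↑(k + (l + 1)) * p (k + (l + 1))
        = -∑' k : ℕ, ((k + (l + 1) : ℕ) : ℝ) * s ^ (k + l) * p (k + (l + 1)) := by
      rw [← tsum_neg]
      exact tsum_congr fun k => by rw [hφnat k]; ring
    have hTq : ∑' k : ℕ, phiAux t c ↑(k + (l + 1)) * q (k + (l + 1))
        = -∑' k : ℕ, ((k + (l + 1) : ℕ) : ℝ) * s ^ (k + l) * q (k + (l + 1)) := by
      rw [← tsum_neg]
      exact tsum_congr fun k => by rw [hφnat k]; ring
    rw [hTp, hTq] at htail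
    have hT : ∑' k : ℕ, ((k + (l + 1) : ℕ) : ℝ) * s ^ (k + l) * q (k + (l + 1))
        ≤ ∑' k : ℕ, ((k + (l + 1) : ℕ) : ℝ) * s ^ (k + l) * p (k + (l + 1)) := by linarith
    have hBsplit : ∀ r : ℕ → ℝ, Summable (fun k : ℕ => ((k : ℝ) + 1) * r (k + 1) * s ^ k) →
        ∑' k : ℕ, ((k : ℝ) + 1) * r (k + 1) * s ^ k
          = (∑ i ∈ Finset.range l, ((i : ℝ) + 1) * r (i + 1) * s ^ i)
            + ∑' k : ℕ, ((k + (l + 1) : ℕ) : ℝ) * s ^ (k + l) * r (k + (l + 1)) := by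
      intro r h
      rw [← Summable.sum_add_tsum_nat_add (f := fun k : ℕ => ((k : ℝ) + 1) * r (k + 1) * s ^ k) l h]
      congr 1
      refine tsum_congr fun k => ?_
      have hidx : k + l + 1 = k + (l + 1) := by omega
      rw [hidx]
      push_cast
      ring
    rw [hBsplit p Sp2, hBsplit q Sq2]
    have hfinB : (∑ i ∈ Finset.range l, ((i : ℝ) + 1) * q (i + 1) * s ^ i)
        = ∑ i ∈ Finset.range l, ((i : ℝ) + 1) * p (i + 1) * s ^ i :=
      Finset.sum_congr rfl fun i hi => by
        rw [heq (i + 1) (Nat.succ_le_of_lt (Finset.mem_range.mp hi))]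
    linarith
end

section
/- Let μ and ν be probability measures on ℝ₊ with supports contained in [c,∞) for some c ≥ 2 and with μ ≤_icv ν, and let p = MPoi(μ), q = MPoi(ν). Then G_{p∘}(s) ≥ G_{q∘}(s) for all s ∈ [0, 1−2/c]. -/
open MeasureTheory

/-- The `μ`-mixed Poisson distribution: `MPoi(μ)(k) = ∫ e^{-λ} λ^k/k! μ(dλ)`. -/
noncomputable def mpoi (μ : Measure ℝ) : ℕ → ℝ :=
  fun k => ∫ l, Real.exp (-l) * l ^ k / (Nat.factorial k : ℝ) ∂μ

/-- The increasing concave order for measures on ℝ: integrals of increasing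
concave functions (for which the integrals exist) are ordered. -/
def icvLEmeas (μ ν : Measure ℝ) : Prop :=
  ∀ φ : ℝ → ℝ, Monotone φ → ConcaveOn ℝ Set.univ φ →
    Integrable φ μ → Integrable φ ν → ∫ x, φ x ∂μ ≤ ∫ x, φ x ∂ν

/-!
By Fubini, `G_{p∘}(s) = m₁(μ)⁻¹ ∫ x e^{-(1-s)x} μ(dx)` and `m₁(p) = m₁(μ)`. The identity is
increasing and concave, so `m₁(μ) ≤ m₁(ν)`. For `t = 1 - s`, the function `x ↦ -x e^{-tx}` is
increasing and concave on `[2/t, ∞) ⊇ [c, ∞)`; extended to the left of `c` by its tangent line it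
becomes a test function for `≤_icv`, which gives `∫ x e^{-tx} dν ≤ ∫ x e^{-tx} dμ`.
-/

open Real Set

section TangentExtension

variable {f f' : ℝ → ℝ} {c : ℝ}

noncomputable def tangentExtension (f : ℝ → ℝ) (c d : ℝ) (x : ℝ) : ℝ :=
  if x ≤ c then f c + d * (x - c) else f x

lemma tangentExtension_eqOn (d : ℝ) : EqOn (tangentExtension f c d) f (Ici c) := by
  intro x hx
  rcases (mem_Ici.1 hx).eq_or_lt with rfl | hlt
  · simp [tangentExtension]
  · simp [tangentExtension, not_le.2 hlt]

lemma hasDerivAt_tangentExtension (hf : ∀ x, c ≤ x → HasDerivAt f (f' x) x) (x : ℝ) :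
    HasDerivAt (tangentExtension f c (f' c)) (f' (max x c)) x := by
  have htangent : ∀ y, HasDerivAt (fun y => f c + f' c * (y - c)) (f' c) y := fun y => by
    simpa using (((hasDerivAt_id y).sub_const c).const_mul (f' c)).const_add (f c)
  rcases lt_trichotomy x c with hx | rfl | hx
  · rw [max_eq_right hx.le]
    refine (htangent x).congr_of_eventuallyEq ?_
    filter_upwards [Iio_mem_nhds hx] with y hy
    simp [tangentExtension, (mem_Iio.1 hy).le]
  · have hleft : HasDerivWithinAt (tangentExtension f x (f' x)) (f' x) (Iic x) x :=
      (htangent x).hasDerivWithinAt.congr (fun y hy => by simp [tangentExtension, mem_Iic.1 hy])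
        (by simp [tangentExtension])
    have hright : HasDerivWithinAt (tangentExtension f x (f' x)) (f' x) (Ici x) x :=
      (hf x le_rfl).hasDerivWithinAt.congr (fun y hy => tangentExtension_eqOn _ hy)
        (tangentExtension_eqOn _ (mem_Ici.2 le_rfl))
    simpa [Iic_union_Ici, hasDerivWithinAt_univ] using hleft.union hright
  · rw [max_eq_left hx.le]
    refine (hf x hx.le).congr_of_eventuallyEq ?_
    filter_upwards [Ioi_mem_nhds hx] with y hy
    exact tangentExtension_eqOn _ (mem_Ioi.1 hy).le

lemma monotone_tangentExtension (hf : ∀ x, c ≤ x → HasDerivAt f (f' x) x)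
    (hf'_nonneg : ∀ x, c ≤ x → 0 ≤ f' x) : Monotone (tangentExtension f c (f' c)) :=
  monotone_of_hasDerivAt_nonneg (hasDerivAt_tangentExtension hf)
    fun x => hf'_nonneg _ (le_max_right x c)

lemma concaveOn_tangentExtension (hf : ∀ x, c ≤ x → HasDerivAt f (f' x) x)
    (hf'_anti : AntitoneOn f' (Ici c)) : ConcaveOn ℝ univ (tangentExtension f c (f' c)) := by
  have hderiv := hasDerivAt_tangentExtension hf
  refine Antitone.concaveOn_univ_of_deriv (fun x => (hderiv x).differentiableAt) ?_
  intro x y hxy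
  rw [(hderiv x).deriv, (hderiv y).deriv]
  exact hf'_anti (le_max_right x c) (le_max_right y c) (max_le_max_right c hxy)

end TangentExtension

lemma hasDerivAt_neg_mul_exp_neg_mul (t x : ℝ) :
    HasDerivAt (fun x => -(x * exp (-(t * x)))) (exp (-(t * x)) * (t * x - 1)) x :=
  ((hasDerivAt_id' x).fun_mul ((hasDerivAt_id' x).const_mul t).fun_neg.exp).fun_neg.congr_deriv
    (by ring)

section NegMulExp

variable {t c : ℝ}

lemma antitoneOn_exp_neg_mul_mul_sub_one (ht : 0 ≤ t) (htc : 2 ≤ t * c) :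
    AntitoneOn (fun x => exp (-(t * x)) * (t * x - 1)) (Ici c) := by
  have hderiv : ∀ x, HasDerivAt (fun x => exp (-(t * x)) * (t * x - 1))
      (t * exp (-(t * x)) * (2 - t * x)) x := fun x =>
    (((hasDerivAt_id' x).const_mul t).fun_neg.exp.fun_mul
      (((hasDerivAt_id' x).const_mul t).sub_const 1)).congr_deriv (by ring)
  refine antitoneOn_of_hasDerivWithinAt_nonpos (convex_Ici c)
    (fun x _ => (hderiv x).continuousAt.continuousWithinAt)
    (fun x _ => (hderiv x).hasDerivWithinAt) fun x hx => ?_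
  rw [interior_Ici] at hx
  have : t * c ≤ t * x := mul_le_mul_of_nonneg_left (mem_Ioi.1 hx).le ht
  exact mul_nonpos_of_nonneg_of_nonpos (by positivity) (by linarith)

lemma exp_neg_mul_mul_sub_one_nonneg (ht : 0 ≤ t) (htc : 1 ≤ t * c) {x : ℝ} (hx : c ≤ x) :
    0 ≤ exp (-(t * x)) * (t * x - 1) :=
  mul_nonneg (exp_pos _).le (by nlinarith)

end NegMulExp

section MixedPoisson

variable {μ : Measure ℝ}

lemma integrable_mul_exp_neg_mul (h0 : ∀ᵐ x ∂μ, 0 ≤ x) (hint : Integrable (fun x => x) μ)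
    {t : ℝ} (ht : 0 ≤ t) : Integrable (fun x => x * exp (-(t * x))) μ := by
  refine hint.mono' (by fun_prop) (h0.mono fun x hx => ?_)
  have : exp (-(t * x)) ≤ 1 := exp_le_one_iff.2 (by nlinarith)
  rw [norm_of_nonneg (by positivity)]
  nlinarith

lemma hasSum_succ_mul_poisson_succ (s x : ℝ) :
    HasSum (fun k : ℕ => ((k : ℝ) + 1) * s ^ k * (exp (-x) * x ^ (k + 1) / (k + 1).factorial))
      (x * exp (-((1 - s) * x))) := by
  have h := (NormedSpace.expSeries_div_hasSum_exp (x * s)).mul_left (x * exp (-x))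
  rw [← exp_eq_exp_ℝ, mul_assoc, ← exp_add] at h
  have hterm : ∀ k : ℕ, ((k : ℝ) + 1) * s ^ k * (exp (-x) * x ^ (k + 1) / (k + 1).factorial)
      = x * exp (-x) * ((x * s) ^ k / k.factorial) := fun k => by
    rw [Nat.factorial_succ, Nat.cast_mul, Nat.cast_succ, mul_pow, pow_succ]
    field_simp
  rw [funext hterm, show -((1 - s) * x) = -x + x * s by ring]
  exact h

/-- The unnormalised pgf of `MPoi(μ)∘`; at `s = 1` it gives the mean of `MPoi(μ)`. -/
lemma hasSum_succ_mul_mpoi_succ (h0 : ∀ᵐ x ∂μ, 0 ≤ x) (hint : Integrable (fun x => x) μ)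
    {s : ℝ} (hs0 : 0 ≤ s) (hs1 : s ≤ 1) :
    HasSum (fun k : ℕ => ((k : ℝ) + 1) * mpoi μ (k + 1) * s ^ k)
      (∫ x, x * exp (-((1 - s) * x)) ∂μ) := by
  set F : ℕ → ℝ → ℝ := fun k x =>
    ((k : ℝ) + 1) * s ^ k * (exp (-x) * x ^ (k + 1) / (k + 1).factorial)
  have hterm : ∀ k : ℕ, ((k : ℝ) + 1) * mpoi μ (k + 1) * s ^ k = ∫ x, F k x ∂μ := fun k => by
    rw [integral_const_mul, mpoi]
    ring
  simp_rw [hterm]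
  refine hasSum_integral_of_dominated_convergence F (fun k => by fun_prop)
    (fun k => h0.mono fun x hx => (norm_of_nonneg (by positivity)).le)
    (ae_of_all _ fun x => (hasSum_succ_mul_poisson_succ s x).summable) ?_
    (ae_of_all _ fun x => hasSum_succ_mul_poisson_succ s x)
  simp_rw [F, (hasSum_succ_mul_poisson_succ s _).tsum_eq]
  exact integrable_mul_exp_neg_mul h0 hint (by linarith)

lemma meanNat_mpoi (h0 : ∀ᵐ x ∂μ, 0 ≤ x) (hint : Integrable (fun x => x) μ) :
    meanNat (mpoi μ) = ∫ x, x ∂μ := by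
  have hsum := hasSum_succ_mul_mpoi_succ h0 hint zero_le_one le_rfl
  simp only [one_pow, mul_one, sub_self, zero_mul, neg_zero, exp_zero] at hsum
  have hshift : HasSum (fun k : ℕ => ((k + 1 : ℕ) : ℝ) * mpoi μ (k + 1)) (∫ x, x ∂μ) := by
    simpa only [Nat.cast_succ] using hsum
  rw [meanNat, (HasSum.zero_add (f := fun k : ℕ => (k : ℝ) * mpoi μ k) hshift).tsum_eq]
  simp only [Nat.cast_zero, zero_mul, zero_add]

lemma pgf_downshift_mpoi (h0 : ∀ᵐ x ∂μ, 0 ≤ x) (hint : Integrable (fun x => x) μ)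
    {s : ℝ} (hs0 : 0 ≤ s) (hs1 : s ≤ 1) :
    pgf (downshift (mpoi μ)) s = (∫ x, x * exp (-((1 - s) * x)) ∂μ) / ∫ x, x ∂μ := by
  rw [pgf, ← (hasSum_succ_mul_mpoi_succ h0 hint hs0 hs1).tsum_eq, ← tsum_div_const]
  simp only [downshift, meanNat_mpoi h0 hint]
  congr 1
  ext k
  ring

end MixedPoisson

lemma icvLEmeas.integral_le_of_ae_eq {μ ν : Measure ℝ} (h : icvLEmeas μ ν) {g φ : ℝ → ℝ}
    (hg_mono : Monotone g) (hg_concave : ConcaveOn ℝ univ g) (hμ : g =ᵐ[μ] φ) (hν : g =ᵐ[ν] φ)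
    (hφμ : Integrable φ μ) (hφν : Integrable φ ν) : ∫ x, φ x ∂μ ≤ ∫ x, φ x ∂ν := by
  rw [← integral_congr_ae hμ, ← integral_congr_ae hν]
  exact h g hg_mono hg_concave (hφμ.congr hμ.symm) (hφν.congr hν.symm)

lemma icvLEmeas.integral_mul_exp_neg_mul_le {μ ν : Measure ℝ} (h : icvLEmeas μ ν) {c t : ℝ}
    (hμc : ∀ᵐ x ∂μ, c ≤ x) (hνc : ∀ᵐ x ∂ν, c ≤ x)
    (hμint : Integrable (fun x => x) μ) (hνint : Integrable (fun x => x) ν)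
    (ht : 0 ≤ t) (htc : 2 ≤ t * c) :
    ∫ x, x * exp (-(t * x)) ∂ν ≤ ∫ x, x * exp (-(t * x)) ∂μ := by
  have hc : 0 ≤ c := by nlinarith
  have hf := fun x (_ : c ≤ x) => hasDerivAt_neg_mul_exp_neg_mul t x
  have hneg := h.integral_le_of_ae_eq (φ := fun x => -(x * exp (-(t * x))))
    (monotone_tangentExtension hf fun x => exp_neg_mul_mul_sub_one_nonneg ht (by linarith))
    (concaveOn_tangentExtension hf (antitoneOn_exp_neg_mul_mul_sub_one ht htc))
    (hμc.mono fun x hx => tangentExtension_eqOn _ hx)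
    (hνc.mono fun x hx => tangentExtension_eqOn _ hx)
    (integrable_mul_exp_neg_mul (hμc.mono fun x hx => hc.trans hx) hμint ht).neg
    (integrable_mul_exp_neg_mul (hνc.mono fun x hx => hc.trans hx) hνint ht).neg
  rwa [integral_neg, integral_neg, neg_le_neg_iff] at hneg

theorem mpoi_downshift_pgf_ge_general (μ ν : Measure ℝ) (c : ℝ) (hc : 2 ≤ c)
    [IsProbabilityMeasure μ]
    (hμsupp : μ {x | x < c} = 0) (hνsupp : ν {x | x < c} = 0)
    (hμint : Integrable (fun x => x) μ) (hνint : Integrable (fun x => x) ν)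
    (hicv : icvLEmeas μ ν) :
    ∀ s ∈ Set.Icc (0 : ℝ) (1 - 2 / c),
      pgf (downshift (mpoi ν)) s ≤ pgf (downshift (mpoi μ)) s := by
  rintro s ⟨hs0, hs⟩
  have hc0 : 0 < c := by linarith
  have htc : 2 ≤ (1 - s) * c := (div_le_iff₀ hc0).1 (by linarith)
  have hs1 : s ≤ 1 := hs.trans (sub_le_self _ (by positivity))
  have hμc : ∀ᵐ x ∂μ, c ≤ x := ae_iff.2 (by simpa only [not_le] using hμsupp)
  have hνc : ∀ᵐ x ∂ν, c ≤ x := ae_iff.2 (by simpa only [not_le] using hνsupp)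
  have hμ0 : ∀ᵐ x ∂μ, 0 ≤ x := hμc.mono fun x hx => hc0.le.trans hx
  have hν0 : ∀ᵐ x ∂ν, 0 ≤ x := hνc.mono fun x hx => hc0.le.trans hx
  have hmean : ∫ x, x ∂μ ≤ ∫ x, x ∂ν :=
    hicv _ monotone_id (concaveOn_id convex_univ) hμint hνint
  have hmean_pos : 0 < ∫ x, x ∂μ :=
    hc0.trans_le (by simpa using integral_mono_ae (integrable_const c) hμint hμc)
  rw [pgf_downshift_mpoi hμ0 hμint hs0 hs1, pgf_downshift_mpoi hν0 hνint hs0 hs1]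
  exact div_le_div₀ (integral_nonneg_of_ae (hμ0.mono fun x hx => by positivity))
    (hicv.integral_mul_exp_neg_mul_le hμc hνc hμint hνint (by linarith) htc) hmean_pos hmean

/-- If `μ ≤_icv ν` are probability measures supported on `[c,∞)` with `c ≥ 2`,
then the downshifted size biasings of the mixed Poisson distributions
`p = MPoi(μ)` and `q = MPoi(ν)` satisfy `G_{p∘}(s) ≥ G_{q∘}(s)` on `[0, 1-2/c]`. -/
theorem mpoi_downshift_pgf_ge (μ ν : Measure ℝ) (c : ℝ) (hc : 2 ≤ c)
    [IsProbabilityMeasure μ] [IsProbabilityMeasure ν]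
    (hμsupp : μ {x | x < c} = 0) (hνsupp : ν {x | x < c} = 0)
    (hμint : Integrable (fun x => x) μ) (hνint : Integrable (fun x => x) ν)
    (hicv : icvLEmeas μ ν) :
    ∀ s ∈ Set.Icc (0 : ℝ) (1 - 2 / c),
      pgf (downshift (mpoi ν)) s ≤ pgf (downshift (mpoi μ)) s :=
  mpoi_downshift_pgf_ge_general μ ν c hc hμsupp hνsupp hμint hνint hicv
end

section
/- For Pareto distributions μᵢ = Par(αᵢ, cᵢ) with shapes αᵢ > 1 and means λᵢ = cᵢ/(1 − 1/αᵢ) (i = 1,2): μ₁ ≤_icx μ₂ if and only if λ₁ ≤ λ₂ and α₁ ≥ α₂; and μ₁ ≤_icv μ₂ if and only if λ₁ ≤ λ₂ and c₁ ≤ c₂. -/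
/-!
`Par(α, c)` is the image of Lebesgue measure on `(0, 1)` under its quantile function
`q(s) = c (1 - s)^(-1/α)`, and `log q` is affine in `-log (1 - s)` with slope `1/α`. So two Pareto
quantile functions are either ordered or cross exactly once. In the crossing case, a subgradient
`k ≥ 0` of `φ` at the crossing value makes `φ - k • id` decrease before it and increase after it,
so `φ (q₁) - k q₁ ≤ φ (q₂) - k q₂` pointwise; integrating and using `E X₁ ≤ E X₂` gives the order
(the cut criterion of Karlin and Novikoff).

Conversely, the means are compared through `φ = id`. The stop-loss transform
`E (X - t)⁺ = c^α t^(1-α) / (α - 1)` (for `t ≥ c`) decays like `t^(1-α)`, so `≤_icx` forces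
`α₂ ≤ α₁`. If `c₂ < c₁`, then `E min(X₁, c₁) = c₁` but `E min(X₂, c₁) < c₁` by Bernoulli's
inequality, so `≤_icv` forces `c₁ ≤ c₂`.
-/

open MeasureTheory

/-- The Pareto distribution `Par(α,c)`: density `α c^α t^{-α-1}` on `(c,∞)`. -/
noncomputable def paretoMeasure (α c : ℝ) : Measure ℝ :=
  volume.withDensity (fun t => ENNReal.ofReal (if c < t then α * c ^ α * t ^ (-(α + 1)) else 0))

/-- The increasing convex order: integrals of increasing convex functions
(for which the integrals exist) are ordered. -/
def icxLEmeas (μ ν : Measure ℝ) : Prop :=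
  ∀ φ : ℝ → ℝ, Monotone φ → ConvexOn ℝ Set.univ φ →
    Integrable φ μ → Integrable φ ν → ∫ x, φ x ∂μ ≤ ∫ x, φ x ∂ν

open Set

theorem sub_mul_le_sub_mul_of_slope_le {f : ℝ → ℝ} {a b k : ℝ} (hab : a < b)
    (h : slope f a b ≤ k) : f b - k * b ≤ f a - k * a := by
  rw [slope_def_field, div_le_iff₀ (sub_pos.2 hab)] at h
  linarith

theorem sub_mul_le_sub_mul_of_le_slope {f : ℝ → ℝ} {a b k : ℝ} (hab : a < b)
    (h : k ≤ slope f a b) : f a - k * a ≤ f b - k * b := by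
  rw [slope_def_field, le_div_iff₀ (sub_pos.2 hab)] at h
  linarith

theorem ConvexOn.exists_antitoneOn_monotoneOn_sub_mul {φ : ℝ → ℝ} (hφ : ConvexOn ℝ univ φ)
    (x₀ : ℝ) : ∃ k, AntitoneOn (fun x => φ x - k * x) (Iic x₀) ∧
      MonotoneOn (fun x => φ x - k * x) (Ici x₀) := by
  have hint : ∀ x : ℝ, x ∈ interior univ := by simp
  refine ⟨derivWithin φ (Ioi x₀) x₀, fun a ha b hb hab => ?_, fun a ha b hb hab => ?_⟩
  · rcases hab.eq_or_lt with rfl | hab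
    · rfl
    refine sub_mul_le_sub_mul_of_slope_le hab ?_
    calc slope φ a b ≤ derivWithin φ (Iio b) b :=
          hφ.slope_le_leftDeriv_of_mem_interior (mem_univ a) (hint b) hab
      _ ≤ derivWithin φ (Ioi b) b := hφ.leftDeriv_le_rightDeriv_of_mem_interior (hint b)
      _ ≤ derivWithin φ (Ioi x₀) x₀ := hφ.monotoneOn_rightDeriv (hint b) (hint x₀) hb
  · rcases hab.eq_or_lt with rfl | hab
    · rfl
    refine sub_mul_le_sub_mul_of_le_slope hab ?_
    calc derivWithin φ (Ioi x₀) x₀ ≤ derivWithin φ (Ioi a) a :=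
          hφ.monotoneOn_rightDeriv (hint x₀) (hint a) ha
      _ ≤ slope φ a b := hφ.rightDeriv_le_slope_of_mem_interior (hint a) (mem_univ b) hab

section CutCriterion

variable {Ω : Type*} [MeasurableSpace Ω] {ν : Measure Ω} {f g : Ω → ℝ} {φ : ℝ → ℝ}

theorem integral_comp_le_of_sub_mul_le (hf : Integrable f ν) (hg : Integrable g ν)
    (hφf : Integrable (fun ω => φ (f ω)) ν) (hφg : Integrable (fun ω => φ (g ω)) ν)
    (hfg : ∫ ω, f ω ∂ν ≤ ∫ ω, g ω ∂ν) {k : ℝ} (hk : 0 ≤ k)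
    (h : ∀ᵐ ω ∂ν, φ (f ω) - k * f ω ≤ φ (g ω) - k * g ω) :
    ∫ ω, φ (f ω) ∂ν ≤ ∫ ω, φ (g ω) ∂ν := by
  have := integral_mono_ae (f := fun ω => φ (f ω) - k * f ω) (g := fun ω => φ (g ω) - k * g ω)
    (hφf.sub (hf.const_mul k)) (hφg.sub (hg.const_mul k)) h
  rw [integral_sub hφf (hf.const_mul k), integral_sub hφg (hg.const_mul k),
    integral_const_mul, integral_const_mul] at this
  linarith [mul_le_mul_of_nonneg_left hfg hk]

theorem integral_comp_le_of_convex_cut (hφm : Monotone φ) (hφc : ConvexOn ℝ univ φ)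
    (hf : Integrable f ν) (hg : Integrable g ν)
    (hφf : Integrable (fun ω => φ (f ω)) ν) (hφg : Integrable (fun ω => φ (g ω)) ν)
    (hfg : ∫ ω, f ω ∂ν ≤ ∫ ω, g ω ∂ν) (x₀ : ℝ)
    (hcut : ∀ᵐ ω ∂ν, (g ω ≤ f ω ∧ f ω ≤ x₀) ∨ (x₀ ≤ f ω ∧ f ω ≤ g ω)) :
    ∫ ω, φ (f ω) ∂ν ≤ ∫ ω, φ (g ω) ∂ν := by
  obtain ⟨k, hanti, hmono⟩ := hφc.exists_antitoneOn_monotoneOn_sub_mul x₀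
  have hk : 0 ≤ k := by
    have h₁ : φ x₀ - k * x₀ ≤ φ (x₀ - 1) - k * (x₀ - 1) :=
      hanti (by simp) (mem_Iic.2 le_rfl) (by linarith)
    linarith [hφm (by linarith : x₀ - 1 ≤ x₀)]
  refine integral_comp_le_of_sub_mul_le hf hg hφf hφg hfg hk (hcut.mono ?_)
  rintro ω (⟨hgf, hfx⟩ | ⟨hxf, hfg⟩)
  · exact hanti (hgf.trans hfx) hfx hgf
  · exact hmono hxf (hxf.trans hfg) hfg

theorem integral_comp_le_of_concave_cut (hφm : Monotone φ) (hφc : ConcaveOn ℝ univ φ)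
    (hf : Integrable f ν) (hg : Integrable g ν)
    (hφf : Integrable (fun ω => φ (f ω)) ν) (hφg : Integrable (fun ω => φ (g ω)) ν)
    (hfg : ∫ ω, f ω ∂ν ≤ ∫ ω, g ω ∂ν) (x₀ : ℝ)
    (hcut : ∀ᵐ ω ∂ν, (f ω ≤ g ω ∧ g ω ≤ x₀) ∨ (x₀ ≤ g ω ∧ g ω ≤ f ω)) :
    ∫ ω, φ (f ω) ∂ν ≤ ∫ ω, φ (g ω) ∂ν := by
  obtain ⟨k, hanti, hmono⟩ := hφc.neg.exists_antitoneOn_monotoneOn_sub_mul x₀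
  have hk : 0 ≤ -k := by
    have h₁ : -φ x₀ - k * x₀ ≤ -φ (x₀ + 1) - k * (x₀ + 1) :=
      hmono (mem_Ici.2 le_rfl) (by simp) (by linarith)
    linarith [hφm (by linarith : x₀ ≤ x₀ + 1)]
  refine integral_comp_le_of_sub_mul_le hf hg hφf hφg hfg hk (hcut.mono ?_)
  rintro ω (⟨hfg, hgx⟩ | ⟨hxg, hgf⟩)
  · have : -φ (g ω) - k * g ω ≤ -φ (f ω) - k * f ω := hanti (hfg.trans hgx) hgx hfg
    linarith
  · have : -φ (g ω) - k * g ω ≤ -φ (f ω) - k * f ω := hmono hxg (hxg.trans hgf) hgf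
    linarith

end CutCriterion

theorem exists_cut_of_slope_lt {a₁ a₂ b₁ b₂ : ℝ} (hb₁ : 0 ≤ b₁) (hb : b₁ < b₂) :
    ∃ y₀, ∀ L, (a₂ + b₂ * L ≤ a₁ + b₁ * L ∧ a₁ + b₁ * L ≤ y₀) ∨
      (y₀ ≤ a₁ + b₁ * L ∧ a₁ + b₁ * L ≤ a₂ + b₂ * L) := by
  set L₀ := (a₁ - a₂) / (b₂ - b₁)
  have hL₀ : (b₂ - b₁) * L₀ = a₁ - a₂ := mul_div_cancel₀ _ (sub_pos.2 hb).ne'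
  refine ⟨a₁ + b₁ * L₀, fun L => ?_⟩
  rcases le_total L L₀ with hL | hL
  · left
    constructor <;> nlinarith
  · right
    constructor <;> nlinarith

open Filter in
theorem le_of_eventually_mul_rpow_le {A B p q : ℝ} (hA : 0 < A)
    (h : ∀ᶠ t in atTop, A * t ^ p ≤ B * t ^ q) : p ≤ q := by
  by_contra! hqp
  obtain ⟨t, ⟨hle, ht⟩, hBA⟩ := ((h.and (eventually_gt_atTop 0)).and
    ((tendsto_rpow_atTop (sub_pos.2 hqp)).eventually_gt_atTop (B / A))).exists
  rw [div_lt_iff₀' hA] at hBA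
  have hsplit : t ^ p = t ^ (p - q) * t ^ q := by rw [← Real.rpow_add ht, sub_add_cancel]
  rw [hsplit, ← mul_assoc] at hle
  exact hle.not_gt (mul_lt_mul_of_pos_right hBA (by positivity))

theorem monotone_max_sub (t : ℝ) : Monotone fun x : ℝ => max (x - t) 0 :=
  fun _ _ h => max_le_max (sub_le_sub_right h t) le_rfl

theorem convexOn_max_sub (t : ℝ) : ConvexOn ℝ univ fun x : ℝ => max (x - t) 0 :=
  ((convexOn_id convex_univ).sub (concaveOn_const t convex_univ)).sup (convexOn_const 0 convex_univ)

theorem monotone_min (t : ℝ) : Monotone fun x : ℝ => min x t :=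
  fun _ _ h => min_le_min_right t h

theorem concaveOn_min (t : ℝ) : ConcaveOn ℝ univ fun x : ℝ => min x t :=
  (concaveOn_id convex_univ).inf (concaveOn_const t convex_univ)

noncomputable def paretoQuantile (α c s : ℝ) : ℝ := c * (1 - s) ^ (-α⁻¹)

section Quantile

variable {α c s : ℝ}

theorem measurable_paretoQuantile : Measurable (paretoQuantile α c) := by
  unfold paretoQuantile; fun_prop

theorem paretoQuantile_eq_exp (hc : 0 < c) (hs : s < 1) :
    paretoQuantile α c s = Real.exp (Real.log c + α⁻¹ * -Real.log (1 - s)) := by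
  rw [paretoQuantile, Real.rpow_def_of_pos (sub_pos.2 hs), Real.exp_add, Real.exp_log hc]
  ring_nf

theorem paretoQuantile_le_iff (hα : 0 < α) (hc : 0 < c) (hs : s < 1) {x : ℝ} (hx : 0 < x) :
    paretoQuantile α c s ≤ x ↔ (c / x) ^ α ≤ 1 - s := by
  rw [paretoQuantile_eq_exp hc hs, ← Real.exp_log hx, Real.exp_le_exp, Real.exp_log hx,
    Real.rpow_def_of_pos (div_pos hc hx), ← Real.exp_log (sub_pos.2 hs), Real.exp_le_exp,
    Real.exp_log (sub_pos.2 hs), Real.log_div hc.ne' hx.ne']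
  rw [← le_sub_iff_add_le', inv_mul_le_iff₀ hα]
  constructor <;> intro h <;> linarith

theorem le_paretoQuantile (hα : 0 ≤ α) (hc : 0 < c) (hs₀ : 0 ≤ s) (hs : s < 1) :
    c ≤ paretoQuantile α c s := by
  have hL : 0 ≤ -Real.log (1 - s) := neg_nonneg.2 (Real.log_nonpos (by linarith) (by linarith))
  rw [paretoQuantile_eq_exp hc hs, ← Real.exp_log hc, Real.exp_le_exp, Real.exp_log hc]
  exact le_add_of_nonneg_right (mul_nonneg (inv_nonneg.2 hα) hL)

theorem lt_paretoQuantile (hα : 0 < α) (hc : 0 < c) (hs₀ : 0 < s) (hs : s < 1) :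
    c < paretoQuantile α c s := by
  have hL : 0 < -Real.log (1 - s) := neg_pos.2 (Real.log_neg (by linarith) (by linarith))
  rw [paretoQuantile_eq_exp hc hs, ← Real.exp_log hc, Real.exp_lt_exp, Real.exp_log hc]
  exact lt_add_of_pos_right _ (mul_pos (inv_pos.2 hα) hL)

theorem paretoQuantile_le_paretoQuantile {α₁ α₂ c₁ c₂ : ℝ} (hα₂ : 0 < α₂) (hα : α₂ ≤ α₁)
    (hc₁ : 0 < c₁) (hc : c₁ ≤ c₂) (hs₀ : 0 ≤ s) (hs : s < 1) :
    paretoQuantile α₁ c₁ s ≤ paretoQuantile α₂ c₂ s := by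
  have hL : 0 ≤ -Real.log (1 - s) := neg_nonneg.2 (Real.log_nonpos (by linarith) (by linarith))
  rw [paretoQuantile_eq_exp hc₁ hs, paretoQuantile_eq_exp (hc₁.trans_le hc) hs, Real.exp_le_exp]
  gcongr

theorem exists_paretoQuantile_cut {α₁ α₂ c₁ c₂ : ℝ} (hα₂ : 0 < α₂) (hα : α₂ < α₁)
    (hc₁ : 0 < c₁) (hc₂ : 0 < c₂) : ∃ x₀, ∀ s < 1,
      (paretoQuantile α₂ c₂ s ≤ paretoQuantile α₁ c₁ s ∧ paretoQuantile α₁ c₁ s ≤ x₀) ∨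
      (x₀ ≤ paretoQuantile α₁ c₁ s ∧ paretoQuantile α₁ c₁ s ≤ paretoQuantile α₂ c₂ s) := by
  obtain ⟨y₀, hy₀⟩ := exists_cut_of_slope_lt (a₁ := Real.log c₁) (a₂ := Real.log c₂)
    (inv_nonneg.2 (hα₂.trans hα).le) (inv_strictAnti₀ hα₂ hα)
  refine ⟨Real.exp y₀, fun s hs => ?_⟩
  simp only [paretoQuantile_eq_exp hc₁ hs, paretoQuantile_eq_exp hc₂ hs, Real.exp_le_exp]
  exact hy₀ _

end Quantile

section Measure

variable {α c : ℝ}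

theorem paretoMeasure_Iic (hα : 0 < α) (hc : 0 < c) (x : ℝ) :
    paretoMeasure α c (Iic x) = if c < x then ENNReal.ofReal (1 - (c / x) ^ α) else 0 := by
  have hdens : (fun t => ENNReal.ofReal (if c < t then α * c ^ α * t ^ (-(α + 1)) else 0)) =
      (Ioi c).indicator (fun t => ENNReal.ofReal (α * c ^ α * t ^ (-(α + 1)))) := by
    ext t; by_cases h : c < t <;> simp [h]
  rw [paretoMeasure, withDensity_apply _ measurableSet_Iic, hdens,
    lintegral_indicator measurableSet_Ioi, Measure.restrict_restrict measurableSet_Ioi,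
    Ioi_inter_Iic]
  split_ifs with hcx
  · have hx : 0 < x := hc.trans hcx
    have h0 : (0 : ℝ) ∉ uIcc c x := by rw [uIcc_of_le hcx.le]; exact fun h => hc.not_ge h.1
    rw [← ofReal_integral_eq_lintegral_ofReal, ← intervalIntegral.integral_of_le hcx.le,
      intervalIntegral.integral_const_mul, integral_rpow (Or.inr ⟨by linarith, h0⟩)]
    · congr 1
      rw [show -(α + 1) + 1 = -α by ring, Real.div_rpow hc.le hx.le, Real.rpow_neg hc.le,
        Real.rpow_neg hx.le]
      field_simp
      ring
    · exact ((intervalIntegral.intervalIntegrable_rpow (Or.inr h0)).const_mul _).1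
    · filter_upwards [ae_restrict_mem measurableSet_Ioc] with t ht
      have : 0 < t := hc.trans ht.1
      positivity
  · rw [Ioc_eq_empty hcx, Measure.restrict_empty, lintegral_zero_measure]

theorem map_paretoQuantile_Iic (hα : 0 < α) (hc : 0 < c) (x : ℝ) :
    (volume.restrict (Ioo 0 1)).map (paretoQuantile α c) (Iic x) =
      if c < x then ENNReal.ofReal (1 - (c / x) ^ α) else 0 := by
  rw [Measure.map_apply measurable_paretoQuantile measurableSet_Iic,
    Measure.restrict_apply (measurable_paretoQuantile measurableSet_Iic)]
  split_ifs with hcx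
  · have hx : 0 < x := hc.trans hcx
    have hset : paretoQuantile α c ⁻¹' Iic x ∩ Ioo 0 1 = Ioc 0 (1 - (c / x) ^ α) := by
      have hr : 0 < (c / x) ^ α := by positivity
      ext s
      simp only [mem_inter_iff, mem_preimage, mem_Iic, mem_Ioo, mem_Ioc]
      constructor
      · rintro ⟨hq, hs₀, hs₁⟩
        exact ⟨hs₀, by linarith [(paretoQuantile_le_iff hα hc hs₁ hx).1 hq]⟩
      · rintro ⟨hs₀, hs⟩
        have hs₁ : s < 1 := by linarith
        exact ⟨(paretoQuantile_le_iff hα hc hs₁ hx).2 (by linarith), hs₀, hs₁⟩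
    rw [hset, Real.volume_Ioc, sub_zero]
  · convert measure_empty (μ := volume)
    refine eq_empty_of_forall_notMem fun s ⟨hq, hs₀, hs₁⟩ => hcx ?_
    exact (lt_paretoQuantile hα hc hs₀ hs₁).trans_le hq

theorem paretoMeasure_eq_map (hα : 0 < α) (hc : 0 < c) :
    paretoMeasure α c = (volume.restrict (Ioo 0 1)).map (paretoQuantile α c) := by
  have : IsFiniteMeasure (volume.restrict (Ioo (0 : ℝ) 1)) := by
    rw [isFiniteMeasure_restrict]; exact measure_Ioo_lt_top.ne
  refine (Measure.ext_of_Iic _ _ fun x => ?_).symm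
  rw [paretoMeasure_Iic hα hc, map_paretoQuantile_Iic hα hc]

end Measure

section Integrals

variable {α c t : ℝ}

theorem integral_paretoMeasure (hα : 0 < α) (hc : 0 < c) {φ : ℝ → ℝ} (hφ : Measurable φ) :
    ∫ x, φ x ∂paretoMeasure α c = ∫ s in Ioo 0 1, φ (paretoQuantile α c s) := by
  rw [paretoMeasure_eq_map hα hc,
    integral_map measurable_paretoQuantile.aemeasurable hφ.aestronglyMeasurable]

theorem integrable_paretoMeasure_iff (hα : 0 < α) (hc : 0 < c) {φ : ℝ → ℝ}
    (hφ : Measurable φ) : Integrable φ (paretoMeasure α c) ↔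
      IntegrableOn (fun s => φ (paretoQuantile α c s)) (Ioo 0 1) := by
  rw [paretoMeasure_eq_map hα hc,
    integrable_map_measure hφ.aestronglyMeasurable measurable_paretoQuantile.aemeasurable]
  rfl

theorem isFiniteMeasure_paretoMeasure (hα : 0 < α) (hc : 0 < c) :
    IsFiniteMeasure (paretoMeasure α c) := by
  have : IsFiniteMeasure (volume.restrict (Ioo (0 : ℝ) 1)) := by
    rw [isFiniteMeasure_restrict]; exact measure_Ioo_lt_top.ne
  rw [paretoMeasure_eq_map hα hc]
  infer_instance

theorem integrableOn_paretoQuantile (hα : 1 < α) :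
    IntegrableOn (paretoQuantile α c) (Ioo 0 1) := by
  have hexp : -1 < -α⁻¹ := neg_lt_neg (inv_lt_one_of_one_lt₀ hα)
  have := ((intervalIntegral.intervalIntegrable_rpow' hexp (a := 0) (b := 1)).comp_sub_left
    1).const_mul c
  unfold paretoQuantile
  simpa using this.symm.1.mono_set Ioo_subset_Ioc_self

theorem setIntegral_paretoQuantile_Ioo_one_sub (hα : 1 < α) {r : ℝ} (hr : 0 ≤ r) :
    ∫ s in Ioo (1 - r) 1, paretoQuantile α c s = c * r ^ (1 - α⁻¹) / (1 - α⁻¹) := by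
  have hexp : -1 < -α⁻¹ := neg_lt_neg (inv_lt_one_of_one_lt₀ hα)
  rw [← integral_Ioc_eq_integral_Ioo, ← intervalIntegral.integral_of_le (by linarith)]
  simp only [paretoQuantile]
  rw [intervalIntegral.integral_comp_sub_left (fun u => c * u ^ (-α⁻¹)) 1,
    intervalIntegral.integral_const_mul, integral_rpow (Or.inl hexp), sub_self, sub_sub_cancel,
    Real.zero_rpow (by linarith), sub_zero, neg_add_eq_sub, mul_div_assoc]

theorem integrable_id_paretoMeasure (hα : 1 < α) (hc : 0 < c) :
    Integrable (fun x => x) (paretoMeasure α c) := by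
  rw [integrable_paretoMeasure_iff (by linarith) hc measurable_id']
  exact integrableOn_paretoQuantile hα

theorem setIntegral_paretoQuantile (hα : 1 < α) :
    ∫ s in Ioo 0 1, paretoQuantile α c s = c / (1 - 1 / α) := by
  simpa using setIntegral_paretoQuantile_Ioo_one_sub (c := c) hα zero_le_one

theorem integral_id_paretoMeasure (hα : 1 < α) (hc : 0 < c) :
    ∫ x, x ∂paretoMeasure α c = c / (1 - 1 / α) := by
  rw [integral_paretoMeasure (by linarith) hc measurable_id', setIntegral_paretoQuantile hα]

theorem integrable_max_sub_paretoMeasure (hα : 1 < α) (hc : 0 < c) (t : ℝ) :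
    Integrable (fun x => max (x - t) 0) (paretoMeasure α c) := by
  have := isFiniteMeasure_paretoMeasure (zero_lt_one.trans hα) hc
  exact ((integrable_id_paretoMeasure hα hc).sub (integrable_const t)).pos_part

theorem integrable_min_paretoMeasure (hα : 1 < α) (hc : 0 < c) (t : ℝ) :
    Integrable (fun x => min x t) (paretoMeasure α c) := by
  have := isFiniteMeasure_paretoMeasure (zero_lt_one.trans hα) hc
  exact (integrable_id_paretoMeasure hα hc).inf (integrable_const t)

theorem integral_max_sub_paretoMeasure (hα : 1 < α) (hc : 0 < c) (ht : c ≤ t) :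
    ∫ x, max (x - t) 0 ∂paretoMeasure α c = c ^ α / (α - 1) * t ^ (1 - α) := by
  have hα₀ : 0 < α := by linarith
  have ht₀ : 0 < t := hc.trans_le ht
  set r := (c / t) ^ α with hr
  have hr₀ : 0 ≤ r := by positivity
  have hr₁ : r ≤ 1 := Real.rpow_le_one (by positivity) ((div_le_one ht₀).2 ht) hα₀.le
  have htail : ∀ s ∈ Ioo (0 : ℝ) 1, max (paretoQuantile α c s - t) 0 =
      (Ioo (1 - r) 1).indicator (fun s => paretoQuantile α c s - t) s := by
    intro s hs
    have hle := paretoQuantile_le_iff hα₀ hc hs.2 ht₀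
    by_cases hmem : s ∈ Ioo (1 - r) 1
    · rw [indicator_of_mem hmem, max_eq_left]
      linarith [not_le.1 (mt hle.1 (by linarith [hmem.1]))]
    · rw [indicator_of_notMem hmem, max_eq_right]
      linarith [hle.2 (by by_contra h; exact hmem ⟨by linarith, hs.2⟩)]
  rw [integral_paretoMeasure hα₀ hc (by fun_prop),
    setIntegral_congr_fun measurableSet_Ioo htail, setIntegral_indicator measurableSet_Ioo,
    Ioo_inter_Ioo, max_eq_right (by linarith), min_self, integral_sub, setIntegral_const,
    setIntegral_paretoQuantile_Ioo_one_sub hα hr₀, Real.volume_real_Ioo_of_le (by linarith)]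
  · have hu : 0 < c / t := div_pos hc ht₀
    rw [hr, ← Real.rpow_mul hu.le, mul_sub, mul_inv_cancel₀ hα₀.ne', mul_one,
      Real.rpow_sub_one hu.ne', Real.div_rpow hc.le ht₀.le, Real.rpow_sub ht₀, Real.rpow_one,
      smul_eq_mul]
    have : 0 < t ^ α := by positivity
    have : α - 1 ≠ 0 := by linarith
    field_simp
    ring
  · exact (integrableOn_paretoQuantile hα).mono_set (Ioo_subset_Ioo_left (by linarith))
  · exact integrableOn_const measure_Ioo_lt_top.ne

theorem integral_min_self_paretoMeasure (hα : 0 < α) (hc : 0 < c) :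
    ∫ x, min x c ∂paretoMeasure α c = c := by
  rw [integral_paretoMeasure hα hc (by fun_prop),
    setIntegral_congr_fun measurableSet_Ioo (g := fun _ => c)
      fun s hs => min_eq_right (le_paretoQuantile hα.le hc hs.1.le hs.2),
    setIntegral_const, Real.volume_real_Ioo_of_le zero_le_one]
  simp

theorem integral_min_paretoMeasure_lt (hα : 1 < α) (hc : 0 < c) (ht : c < t) :
    ∫ x, min x t ∂paretoMeasure α c < t := by
  have ht₀ : 0 < t := hc.trans ht
  have hmin : (fun x => min x t) = fun x => x - max (x - t) 0 := by
    ext x; rcases le_total x t with h | h <;> simp [h]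
  have hbern : 1 + α * (c / t - 1) < (1 + (c / t - 1)) ^ α :=
    one_add_mul_self_lt_rpow_one_add (by linarith [div_pos hc ht₀])
      (sub_ne_zero.2 ((div_lt_one ht₀).2 ht).ne) hα
  rw [hmin, integral_sub (integrable_id_paretoMeasure hα hc)
      (integrable_max_sub_paretoMeasure hα hc t),
    integral_id_paretoMeasure hα hc, integral_max_sub_paretoMeasure hα hc ht.le]
  rw [add_sub_cancel, Real.div_rpow hc.le ht₀.le] at hbern
  have hgap := mul_lt_mul_of_pos_left hbern ht₀
  have hα₁ : α - 1 ≠ 0 := by linarith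
  have hT : 0 < t ^ α := by positivity
  have e : c / (1 - 1 / α) - c ^ α / (α - 1) * t ^ (1 - α) =
      (t * (1 + α * (c / t - 1)) - t * (c ^ α / t ^ α)) / (α - 1) + t := by
    rw [Real.rpow_sub ht₀, Real.rpow_one]
    field_simp
    ring
  rw [e, add_lt_iff_neg_right]
  exact div_neg_of_neg_of_pos (by linarith) (by linarith)

end Integrals

section ParetoOrders

variable {α₁ α₂ c₁ c₂ : ℝ}

theorem le_of_icxLEmeas_paretoMeasure (hα₁ : 1 < α₁) (hα₂ : 1 < α₂) (hc₁ : 0 < c₁)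
    (hc₂ : 0 < c₂) (h : icxLEmeas (paretoMeasure α₁ c₁) (paretoMeasure α₂ c₂)) : α₂ ≤ α₁ := by
  have hstop : ∀ᶠ t in Filter.atTop,
      c₁ ^ α₁ / (α₁ - 1) * t ^ (1 - α₁) ≤ c₂ ^ α₂ / (α₂ - 1) * t ^ (1 - α₂) := by
    filter_upwards [Filter.eventually_ge_atTop (max c₁ c₂)] with t ht
    rw [← integral_max_sub_paretoMeasure hα₁ hc₁ (le_of_max_le_left ht),
      ← integral_max_sub_paretoMeasure hα₂ hc₂ (le_of_max_le_right ht)]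
    exact h _ (monotone_max_sub t) (convexOn_max_sub t)
      (integrable_max_sub_paretoMeasure hα₁ hc₁ t) (integrable_max_sub_paretoMeasure hα₂ hc₂ t)
  have := le_of_eventually_mul_rpow_le (by have := sub_pos.2 hα₁; positivity) hstop
  linarith

theorem le_of_icvLEmeas_paretoMeasure (hα₁ : 1 < α₁) (hα₂ : 1 < α₂) (hc₁ : 0 < c₁)
    (hc₂ : 0 < c₂) (h : icvLEmeas (paretoMeasure α₁ c₁) (paretoMeasure α₂ c₂)) : c₁ ≤ c₂ := by
  by_contra! hc
  have := h _ (monotone_min c₁) (concaveOn_min c₁)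
    (integrable_min_paretoMeasure hα₁ hc₁ c₁) (integrable_min_paretoMeasure hα₂ hc₂ c₁)
  rw [integral_min_self_paretoMeasure (by linarith) hc₁] at this
  exact this.not_gt (integral_min_paretoMeasure_lt hα₂ hc₂ hc)

theorem icxLEmeas_paretoMeasure (hα₁ : 1 < α₁) (hα₂ : 1 < α₂) (hc₁ : 0 < c₁) (hc₂ : 0 < c₂)
    (hmean : c₁ / (1 - 1 / α₁) ≤ c₂ / (1 - 1 / α₂)) (hα : α₂ ≤ α₁) :
    icxLEmeas (paretoMeasure α₁ c₁) (paretoMeasure α₂ c₂) := by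
  intro φ hφm hφc hφ₁ hφ₂
  rw [integrable_paretoMeasure_iff (by linarith) hc₁ hφm.measurable] at hφ₁
  rw [integrable_paretoMeasure_iff (by linarith) hc₂ hφm.measurable] at hφ₂
  rw [integral_paretoMeasure (by linarith) hc₁ hφm.measurable,
    integral_paretoMeasure (by linarith) hc₂ hφm.measurable]
  rcases hα.lt_or_eq with hlt | rfl
  · obtain ⟨x₀, hx₀⟩ := exists_paretoQuantile_cut (by linarith) hlt hc₁ hc₂
    refine integral_comp_le_of_convex_cut hφm hφc (integrableOn_paretoQuantile hα₁)
      (integrableOn_paretoQuantile hα₂) hφ₁ hφ₂ ?_ x₀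
      (ae_restrict_of_forall_mem measurableSet_Ioo fun s hs => hx₀ s hs.2)
    rwa [setIntegral_paretoQuantile hα₁, setIntegral_paretoQuantile hα₂]
  · have hc : c₁ ≤ c₂ := (div_le_div_iff_of_pos_right (by
      have := inv_lt_one_of_one_lt₀ hα₁; rw [one_div]; linarith)).1 hmean
    exact setIntegral_mono_on hφ₁ hφ₂ measurableSet_Ioo fun s hs =>
      hφm (paretoQuantile_le_paretoQuantile (by linarith) le_rfl hc₁ hc hs.1.le hs.2)

theorem icvLEmeas_paretoMeasure (hα₁ : 1 < α₁) (hα₂ : 1 < α₂) (hc₁ : 0 < c₁) (hc₂ : 0 < c₂)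
    (hmean : c₁ / (1 - 1 / α₁) ≤ c₂ / (1 - 1 / α₂)) (hc : c₁ ≤ c₂) :
    icvLEmeas (paretoMeasure α₁ c₁) (paretoMeasure α₂ c₂) := by
  intro φ hφm hφc hφ₁ hφ₂
  rw [integrable_paretoMeasure_iff (by linarith) hc₁ hφm.measurable] at hφ₁
  rw [integrable_paretoMeasure_iff (by linarith) hc₂ hφm.measurable] at hφ₂
  rw [integral_paretoMeasure (by linarith) hc₁ hφm.measurable,
    integral_paretoMeasure (by linarith) hc₂ hφm.measurable]
  rcases lt_or_ge α₁ α₂ with hlt | hle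
  · obtain ⟨x₀, hx₀⟩ := exists_paretoQuantile_cut (by linarith) hlt hc₂ hc₁
    refine integral_comp_le_of_concave_cut hφm hφc (integrableOn_paretoQuantile hα₁)
      (integrableOn_paretoQuantile hα₂) hφ₁ hφ₂ ?_ x₀
      (ae_restrict_of_forall_mem measurableSet_Ioo fun s hs => hx₀ s hs.2)
    rwa [setIntegral_paretoQuantile hα₁, setIntegral_paretoQuantile hα₂]
  · exact setIntegral_mono_on hφ₁ hφ₂ measurableSet_Ioo fun s hs =>
      hφm (paretoQuantile_le_paretoQuantile (by linarith) hle hc₁ hc hs.1.le hs.2)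

end ParetoOrders

/-- For Pareto distributions `μᵢ = Par(αᵢ,cᵢ)` with shapes `αᵢ > 1` and means
`λᵢ = cᵢ/(1-1/αᵢ)`: `μ₁ ≤_icx μ₂` iff `λ₁ ≤ λ₂` and `α₁ ≥ α₂`; and
`μ₁ ≤_icv μ₂` iff `λ₁ ≤ λ₂` and `c₁ ≤ c₂`. -/
theorem pareto_icx_icv_iff (α₁ α₂ c₁ c₂ : ℝ) (hα₁ : 1 < α₁) (hα₂ : 1 < α₂)
    (hc₁ : 0 < c₁) (hc₂ : 0 < c₂) :
    (icxLEmeas (paretoMeasure α₁ c₁) (paretoMeasure α₂ c₂) ↔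
      c₁ / (1 - 1 / α₁) ≤ c₂ / (1 - 1 / α₂) ∧ α₂ ≤ α₁) ∧
    (icvLEmeas (paretoMeasure α₁ c₁) (paretoMeasure α₂ c₂) ↔
      c₁ / (1 - 1 / α₁) ≤ c₂ / (1 - 1 / α₂) ∧ c₁ ≤ c₂) := by
  have hmean : (∫ x, x ∂paretoMeasure α₁ c₁) ≤ ∫ x, x ∂paretoMeasure α₂ c₂ ↔
      c₁ / (1 - 1 / α₁) ≤ c₂ / (1 - 1 / α₂) := by
    rw [integral_id_paretoMeasure hα₁ hc₁, integral_id_paretoMeasure hα₂ hc₂]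
  have hid₁ := integrable_id_paretoMeasure hα₁ hc₁
  have hid₂ := integrable_id_paretoMeasure hα₂ hc₂
  refine ⟨⟨fun h => ⟨?_, le_of_icxLEmeas_paretoMeasure hα₁ hα₂ hc₁ hc₂ h⟩,
      fun h => icxLEmeas_paretoMeasure hα₁ hα₂ hc₁ hc₂ h.1 h.2⟩,
    ⟨fun h => ⟨?_, le_of_icvLEmeas_paretoMeasure hα₁ hα₂ hc₁ hc₂ h⟩,
      fun h => icvLEmeas_paretoMeasure hα₁ hα₂ hc₁ hc₂ h.1 h.2⟩⟩
  · exact hmean.1 (h _ monotone_id (convexOn_id convex_univ) hid₁ hid₂)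
  · exact hmean.1 (h _ monotone_id (concaveOn_id convex_univ) hid₁ hid₂)
end
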